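/- arXiv:2507.20332 — 9 statements merged into one kernel-verified Lean document; each statement's English description precedes it below -/
import Mathlib

section
/- Let n ≥ 1 and let Φ⁺ ⊂ ℝⁿ be one of the classical positive root sets A_{n-1}⁺, B_n⁺, C_n⁺, D_n⁺. If α, β ∈ Φ⁺ and β − α is a finite sum (repetitions allowed) of elements of Φ⁺, then there exist u ≥ 1 and γ₁, …, γ_u ∈ Φ⁺ such that β = α + γ₁ + ⋯ + γ_u and, for every 1 ≤ i ≤ u, the partial sum α + γ₁ + ⋯ + γ_i belongs to Φ⁺. -/
/-!
Let `ρ` be a vector with `0 < ρ ⬝ᵥ γ` for every `γ ∈ Φ` (here `ρᵢ = n - i`). If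
`β - α = γ₁ + ⋯ + γᵤ` with `u ≥ 1`, then `β ≠ α`, so `0 < (β - α) ⬝ᵥ (β - α)` gives a summand `γ`
with `0 < (β - α) ⬝ᵥ γ`; hence `α ⬝ᵥ γ < 0` or `0 < β ⬝ᵥ γ`. In the root system `Φ ∪ -Φ` an
obtuse pair of roots sums to a root or to zero, so `α + γ` or `β - γ` is a root, and it is
positive because its `ρ`-height is. Thus `γ` can be split off at the front or at the back of the
chain, and induction on `u` finishes. For the classical types the obtuse-sum property follows by
writing roots as sums of signed basis vectors `±εᵢ`, whose pairwise dot products are `1`, `-1`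
or `0`; type `A` is the part of type `D` with coordinate sum zero.
-/

/-- The standard basis vector `ε_i` of `ℝⁿ`. -/
noncomputable def eps (n : ℕ) (i : Fin n) : Fin n → ℝ := Pi.single i 1

/-- The positive roots of type `A_{n-1}`: `ε_i - ε_j` for `i < j`. -/
def PhiA (n : ℕ) : Set (Fin n → ℝ) :=
  {v | ∃ i j : Fin n, i < j ∧ v = eps n i - eps n j}

/-- The positive roots of type `B_n`: `ε_i - ε_j`, `ε_i + ε_j` for `i < j`, and `ε_i`. -/
def PhiB (n : ℕ) : Set (Fin n → ℝ) :=
  {v | (∃ i j : Fin n, i < j ∧ (v = eps n i - eps n j ∨ v = eps n i + eps n j)) ∨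
    ∃ i : Fin n, v = eps n i}

/-- The positive roots of type `C_n`: `ε_i - ε_j`, `ε_i + ε_j` for `i < j`, and `2ε_i`. -/
def PhiC (n : ℕ) : Set (Fin n → ℝ) :=
  {v | (∃ i j : Fin n, i < j ∧ (v = eps n i - eps n j ∨ v = eps n i + eps n j)) ∨
    ∃ i : Fin n, v = eps n i + eps n i}

/-- The positive roots of type `D_n`: `ε_i - ε_j` and `ε_i + ε_j` for `i < j`. -/
def PhiD (n : ℕ) : Set (Fin n → ℝ) :=
  {v | ∃ i j : Fin n, i < j ∧ (v = eps n i - eps n j ∨ v = eps n i + eps n j)}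

open Pointwise

section ObtuseSumClosed

variable {ι : Type*} [Fintype ι]

def ObtuseSumClosed (R : Set (ι → ℝ)) : Prop :=
  ∀ v ∈ R, ∀ w ∈ R, v ⬝ᵥ w < 0 → v + w = 0 ∨ v + w ∈ R

theorem ObtuseSumClosed.union {R S : Set (ι → ℝ)} (hR : ObtuseSumClosed R)
    (hS : ObtuseSumClosed S)
    (hRS : ∀ v ∈ R, ∀ w ∈ S, v ⬝ᵥ w < 0 → v + w = 0 ∨ v + w ∈ R ∪ S) :
    ObtuseSumClosed (R ∪ S) := by
  rintro v (hv | hv) w (hw | hw) hvw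
  · exact (hR v hv w hw hvw).imp_right Or.inl
  · exact hRS v hv w hw hvw
  · rw [add_comm]
    exact hRS w hw v hv (by rwa [dotProduct_comm])
  · exact (hS v hv w hw hvw).imp_right Or.inr

theorem ObtuseSumClosed.inter {R K : Set (ι → ℝ)} (hR : ObtuseSumClosed R)
    (hK : ∀ v ∈ K, ∀ w ∈ K, v + w ∈ K) : ObtuseSumClosed (R ∩ K) := by
  rintro v ⟨hvR, hvK⟩ w ⟨hwR, hwK⟩ hvw
  exact (hR v hvR w hwR hvw).imp_right fun h => ⟨h, hK v hvK w hwK⟩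

end ObtuseSumClosed

section PartialSums

variable {V : Type*} [AddCommMonoid V]

def PartialSumsIn (Φ : Set V) (α : V) (l : List V) : Prop :=
  ∀ k, 1 ≤ k → k ≤ l.length → α + (l.take k).sum ∈ Φ

theorem PartialSumsIn.nil (Φ : Set V) (α : V) : PartialSumsIn Φ α [] :=
  fun _ hk hk' => absurd (hk.trans hk') (by simp)

theorem PartialSumsIn.cons {Φ : Set V} {α γ : V} {l : List V} (hγ : α + γ ∈ Φ)
    (hl : PartialSumsIn Φ (α + γ) l) : PartialSumsIn Φ α (γ :: l) := by
  rintro (_ | _ | k) hk hk'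
  · omega
  · simpa using hγ
  · simpa [add_assoc] using hl (k + 1) (by omega) (by simpa using hk')

theorem PartialSumsIn.append_singleton {Φ : Set V} {α γ : V} {l : List V}
    (hl : PartialSumsIn Φ α l) (hγ : α + (l.sum + γ) ∈ Φ) :
    PartialSumsIn Φ α (l ++ [γ]) := by
  intro k hk hk'
  rcases le_or_gt k l.length with hkl | hkl
  · rw [List.take_append_of_le_length hkl]
    exact hl k hk hkl
  · rw [List.take_of_length_le (by simpa using hkl)]
    simpa using hγ

end PartialSums

section PositiveSystem

variable {ι : Type*} [Fintype ι] {Φ : Set (ι → ℝ)} {ρ : ι → ℝ}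

theorem dotProduct_list_sum (v : ι → ℝ) (l : List (ι → ℝ)) :
    v ⬝ᵥ l.sum = (l.map (v ⬝ᵥ ·)).sum := by
  induction l with
  | nil => simp
  | cons γ l ih => simp [dotProduct_add, ih]

theorem dotProduct_list_sum_nonneg (hρ : ∀ v ∈ Φ, 0 < ρ ⬝ᵥ v) {l : List (ι → ℝ)}
    (hl : ∀ γ ∈ l, γ ∈ Φ) : 0 ≤ ρ ⬝ᵥ l.sum := by
  rw [dotProduct_list_sum]
  exact List.sum_nonneg (by simpa using fun γ hγ => (hρ γ (hl γ hγ)).le)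

theorem dotProduct_list_sum_pos (hρ : ∀ v ∈ Φ, 0 < ρ ⬝ᵥ v) {l : List (ι → ℝ)}
    (hl : ∀ γ ∈ l, γ ∈ Φ) (hne : l ≠ []) : 0 < ρ ⬝ᵥ l.sum := by
  rw [dotProduct_list_sum]
  exact List.sum_pos _ (by simpa using fun γ hγ => hρ γ (hl γ hγ)) (by simpa using hne)

theorem add_mem_of_dotProduct_neg (hΦ : ObtuseSumClosed (Φ ∪ -Φ))
    (hρ : ∀ v ∈ Φ, 0 < ρ ⬝ᵥ v) {v w : ι → ℝ} (hv : v ∈ Φ ∪ -Φ) (hw : w ∈ Φ ∪ -Φ)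
    (hvw : v ⬝ᵥ w < 0) (hpos : 0 < ρ ⬝ᵥ (v + w)) : v + w ∈ Φ := by
  rcases hΦ v hv w hw hvw with h0 | h | h
  · simp [h0] at hpos
  · exact h
  · have := hρ _ (Set.mem_neg.mp h)
    rw [dotProduct_neg] at this
    linarith

theorem exists_add_mem_or_sub_mem (hΦ : ObtuseSumClosed (Φ ∪ -Φ))
    (hρ : ∀ v ∈ Φ, 0 < ρ ⬝ᵥ v) {α β : ι → ℝ} {l : List (ι → ℝ)} (hα : α ∈ Φ) (hβ : β ∈ Φ)
    (hl : ∀ γ ∈ l, γ ∈ Φ) (hne : l ≠ []) (h : β = α + l.sum) :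
    ∃ γ ∈ l, α + γ ∈ Φ ∨ β - γ ∈ Φ := by
  have hsum : l.sum ≠ 0 := fun h0 => by
    simpa [h0] using dotProduct_list_sum_pos hρ hl hne
  have hsq : 0 < l.sum ⬝ᵥ l.sum := by
    simpa using Matrix.dotProduct_self_star_pos_iff.mpr hsum
  obtain ⟨γ, hγl, hγ⟩ : ∃ γ ∈ l, 0 < l.sum ⬝ᵥ γ :=
    List.exists_lt_of_sum_lt (fun _ => 0) (l.sum ⬝ᵥ ·)
      (by simpa [← dotProduct_list_sum, List.sum_map_zero] using hsq)
  have hγΦ := hl γ hγl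
  have hsplit : β - γ = α + (l.erase γ).sum := by
    rw [h, (List.perm_cons_erase hγl).sum_eq, List.sum_cons]; abel
  have hpos : 0 < ρ ⬝ᵥ α := hρ α hα
  rw [show l.sum = β - α by rw [h]; abel, sub_dotProduct] at hγ
  by_cases hαγ : α ⬝ᵥ γ < 0
  · refine ⟨γ, hγl, Or.inl (add_mem_of_dotProduct_neg hΦ hρ (.inl hα) (.inl hγΦ) hαγ ?_)⟩
    rw [dotProduct_add]; linarith [hρ γ hγΦ]
  · refine ⟨γ, hγl, Or.inr ?_⟩
    rw [sub_eq_add_neg] at hsplit ⊢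
    refine add_mem_of_dotProduct_neg hΦ hρ (.inl hβ) (.inr (by simpa using hγΦ))
      (by rw [dotProduct_neg]; linarith) ?_
    rw [hsplit, dotProduct_add]
    linarith [dotProduct_list_sum_nonneg hρ (l := l.erase γ)
      fun x hx => hl x (List.mem_of_mem_erase hx)]

theorem exists_perm_partialSumsIn (hΦ : ObtuseSumClosed (Φ ∪ -Φ))
    (hρ : ∀ v ∈ Φ, 0 < ρ ⬝ᵥ v) {α β : ι → ℝ} {l : List (ι → ℝ)} (hα : α ∈ Φ) (hβ : β ∈ Φ)
    (hl : ∀ γ ∈ l, γ ∈ Φ) (h : β = α + l.sum) :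
    ∃ l', l'.Perm l ∧ PartialSumsIn Φ α l' := by
  rcases eq_or_ne l [] with rfl | hne
  · exact ⟨[], .nil, .nil Φ α⟩
  obtain ⟨γ, hγl, hγ⟩ := exists_add_mem_or_sub_mem hΦ hρ hα hβ hl hne h
  have hl' : ∀ x ∈ l.erase γ, x ∈ Φ := fun x hx => hl x (List.mem_of_mem_erase hx)
  have hsum : l.sum = γ + (l.erase γ).sum := by
    rw [(List.perm_cons_erase hγl).sum_eq, List.sum_cons]
  have hshorter : (l.erase γ).length < l.length := by
    rw [List.length_erase_of_mem hγl]; exact Nat.sub_one_lt (by simpa using hne)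
  rcases hγ with hαγ | hβγ
  · obtain ⟨l', hperm, hl'sums⟩ :=
      exists_perm_partialSumsIn hΦ hρ hαγ hβ hl' (by rw [h, hsum, add_assoc])
    exact ⟨γ :: l', (hperm.cons γ).trans (List.perm_cons_erase hγl).symm, hl'sums.cons hαγ⟩
  · obtain ⟨l', hperm, hl'sums⟩ :=
      exists_perm_partialSumsIn hΦ hρ hα hβγ hl' (by rw [h, hsum]; abel)
    refine ⟨l' ++ [γ], ((List.perm_append_singleton γ l').trans
      ((hperm.cons γ).trans (List.perm_cons_erase hγl).symm)), hl'sums.append_singleton ?_⟩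
    rw [hperm.sum_eq, add_comm _ γ, ← hsum, ← h]
    exact hβ
termination_by l.length

end PositiveSystem

section SignedBasis

variable {ι : Type*} [Fintype ι] [DecidableEq ι]

def signedBasis (ι : Type*) [DecidableEq ι] : Set (ι → ℝ) :=
  {u | ∃ i, ∃ s : ℝ, |s| = 1 ∧ u = Pi.single i s}

theorem single_dotProduct_single (i j : ι) (s t : ℝ) :
    (Pi.single i s : ι → ℝ) ⬝ᵥ Pi.single j t = if i = j then s * t else 0 := by
  by_cases hij : i = j
  · subst hij; simp
  · simp [hij]

theorem dotProduct_self_of_mem_signedBasis {u : ι → ℝ} (hu : u ∈ signedBasis ι) :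
    u ⬝ᵥ u = 1 := by
  obtain ⟨i, s, hs, rfl⟩ := hu
  rw [single_dotProduct_single, if_pos rfl, ← abs_mul_abs_self, hs, one_mul]

theorem eq_or_eq_neg_or_dotProduct_eq_zero {u u' : ι → ℝ} (hu : u ∈ signedBasis ι)
    (hu' : u' ∈ signedBasis ι) : u' = u ∨ u' = -u ∨ u ⬝ᵥ u' = 0 := by
  obtain ⟨i, s, hs, rfl⟩ := hu
  obtain ⟨j, t, ht, rfl⟩ := hu'
  by_cases hij : i = j
  · subst hij
    rcases abs_eq_abs.mp (ht.trans hs.symm) with rfl | rfl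
    · exact .inl rfl
    · exact .inr (.inl (by rw [Pi.single_neg]))
  · exact .inr (.inr (by rw [single_dotProduct_single, if_neg hij]))

theorem eq_neg_of_dotProduct_neg {u u' : ι → ℝ} (hu : u ∈ signedBasis ι)
    (hu' : u' ∈ signedBasis ι) (h : u ⬝ᵥ u' < 0) : u' = -u := by
  rcases eq_or_eq_neg_or_dotProduct_eq_zero hu hu' with rfl | h' | h'
  · rw [dotProduct_self_of_mem_signedBasis hu] at h
    norm_num at h
  · exact h'
  · rw [h'] at h
    exact absurd h (lt_irrefl 0)

theorem obtuseSumClosed_signedBasis : ObtuseSumClosed (signedBasis ι) :=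
  fun u hu _ hu' h => .inl (by rw [eq_neg_of_dotProduct_neg hu hu' h, add_neg_cancel])

theorem obtuseSumClosed_doubles_signedBasis :
    ObtuseSumClosed ((fun u => u + u) '' signedBasis ι) := by
  rintro _ ⟨u, hu, rfl⟩ _ ⟨u', hu', rfl⟩ h
  dsimp only at h ⊢
  have : u ⬝ᵥ u' < 0 := by
    simp only [add_dotProduct, dotProduct_add] at h
    linarith
  rw [eq_neg_of_dotProduct_neg hu hu' this]
  exact .inl (by abel)

/-- The roots `±εᵢ ± εⱼ`, `i ≠ j`, of type `D`. -/
def rootsD (ι : Type*) [Fintype ι] [DecidableEq ι] : Set (ι → ℝ) :=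
  {v | ∃ u ∈ signedBasis ι, ∃ u' ∈ signedBasis ι, u ⬝ᵥ u' = 0 ∧ v = u + u'}

theorem exists_eq_neg_add_of_dotProduct_neg {v u : ι → ℝ} (hv : v ∈ rootsD ι)
    (hu : u ∈ signedBasis ι) (h : v ⬝ᵥ u < 0) :
    ∃ u' ∈ signedBasis ι, u ⬝ᵥ u' = 0 ∧ v = -u + u' := by
  obtain ⟨u₁, h₁, u₂, h₂, h₁₂, rfl⟩ := hv
  rw [add_dotProduct] at h
  by_cases h₁u : u₁ ⬝ᵥ u < 0
  · obtain rfl := eq_neg_of_dotProduct_neg h₁ hu h₁u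
    exact ⟨u₂, h₂, by rw [neg_dotProduct, h₁₂, neg_zero], by rw [neg_neg]⟩
  · obtain rfl := eq_neg_of_dotProduct_neg h₂ hu (by linarith)
    exact ⟨u₁, h₁, by rw [neg_dotProduct, dotProduct_comm, h₁₂, neg_zero], by abel⟩

theorem add_mem_rootsD_of_dotProduct_neg {v u₃ u₄ : ι → ℝ} (hv : v ∈ rootsD ι)
    (h₃ : u₃ ∈ signedBasis ι) (h₄ : u₄ ∈ signedBasis ι) (h₃₄ : u₃ ⬝ᵥ u₄ = 0)
    (hv₃ : v ⬝ᵥ u₃ < 0) (hvw : v ⬝ᵥ (u₃ + u₄) < 0) :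
    v + (u₃ + u₄) = 0 ∨ v + (u₃ + u₄) ∈ rootsD ι := by
  obtain ⟨u', h', h₃', rfl⟩ := exists_eq_neg_add_of_dotProduct_neg hv h₃ hv₃
  have hlt : u' ⬝ᵥ u₄ < 1 := by
    simp only [add_dotProduct, dotProduct_add, neg_dotProduct, h₃₄, dotProduct_comm u' u₃, h₃',
      dotProduct_self_of_mem_signedBasis h₃] at hvw
    linarith
  rw [show -u₃ + u' + (u₃ + u₄) = u' + u₄ by abel]
  rcases eq_or_eq_neg_or_dotProduct_eq_zero h' h₄ with rfl | rfl | h'₄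
  · rw [dotProduct_self_of_mem_signedBasis h'] at hlt
    exact absurd hlt (lt_irrefl 1)
  · exact .inl (add_neg_cancel u')
  · exact .inr ⟨u', h', u₄, h₄, h'₄, rfl⟩

theorem obtuseSumClosed_rootsD : ObtuseSumClosed (rootsD ι) := by
  rintro v hv _ ⟨u₃, h₃, u₄, h₄, h₃₄, rfl⟩ hvw
  by_cases hv₃ : v ⬝ᵥ u₃ < 0
  · exact add_mem_rootsD_of_dotProduct_neg hv h₃ h₄ h₃₄ hv₃ hvw
  · rw [add_comm u₃] at hvw ⊢
    refine add_mem_rootsD_of_dotProduct_neg hv h₄ h₃ (by rwa [dotProduct_comm]) ?_ hvw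
    rw [dotProduct_add] at hvw
    linarith

theorem obtuseSumClosed_rootsB : ObtuseSumClosed (rootsD ι ∪ signedBasis ι) := by
  refine obtuseSumClosed_rootsD.union obtuseSumClosed_signedBasis
    fun v hv u hu h => .inr (.inr ?_)
  obtain ⟨u', h', -, rfl⟩ := exists_eq_neg_add_of_dotProduct_neg hv hu h
  rwa [neg_add_cancel_comm]

theorem obtuseSumClosed_rootsC :
    ObtuseSumClosed (rootsD ι ∪ (fun u => u + u) '' signedBasis ι) := by
  refine obtuseSumClosed_rootsD.union obtuseSumClosed_doubles_signedBasis ?_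
  rintro v hv _ ⟨u, hu, rfl⟩ h
  dsimp only at h ⊢
  have hvu : v ⬝ᵥ u < 0 := by
    rw [dotProduct_add] at h
    linarith
  obtain ⟨u', h', hu', rfl⟩ := exists_eq_neg_add_of_dotProduct_neg hv hu hvu
  exact .inr (.inl ⟨u, hu, u', h', hu', by abel⟩)

end SignedBasis

section ClassicalTypes

variable {n : ℕ}

theorem single_add_single_mem_PhiD_union_neg {i j : Fin n} (hij : i < j) {s t : ℝ}
    (hs : |s| = 1) (ht : |t| = 1) : Pi.single i s + Pi.single j t ∈ PhiD n ∪ -PhiD n := by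
  rcases (abs_eq zero_le_one).mp hs with rfl | rfl <;>
    rcases (abs_eq zero_le_one).mp ht with rfl | rfl
  · exact .inl ⟨i, j, hij, .inr rfl⟩
  · exact .inl ⟨i, j, hij, .inl (by simp [eps, Pi.single_neg, sub_eq_add_neg])⟩
  · exact .inr ⟨i, j, hij, .inl (by simp [eps, Pi.single_neg, sub_eq_add_neg, add_comm])⟩
  · exact .inr ⟨i, j, hij, .inr (by simp [eps, Pi.single_neg, add_comm])⟩

theorem PhiD_union_neg_eq_rootsD : PhiD n ∪ -PhiD n = rootsD (Fin n) := by
  ext v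
  constructor
  · have hmem : ∀ {i j : Fin n} {s t : ℝ}, i < j → |s| = 1 → |t| = 1 →
        Pi.single i s + Pi.single j t ∈ rootsD (Fin n) := fun hij hs ht =>
      ⟨_, ⟨_, _, hs, rfl⟩, _, ⟨_, _, ht, rfl⟩, by simp [hij.ne], rfl⟩
    rintro (⟨i, j, hij, rfl | rfl⟩ | ⟨i, j, hij, h | h⟩)
    · simpa [eps, Pi.single_neg, sub_eq_add_neg] using
        hmem hij (s := 1) (t := -1) (by simp) (by simp)
    · exact hmem hij (by simp) (by simp)
    · rw [← neg_neg v, h]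
      simpa [eps, Pi.single_neg, neg_add_eq_sub] using
        hmem hij (s := -1) (t := 1) (by simp) (by simp)
    · rw [← neg_neg v, h]
      simpa [eps, Pi.single_neg, add_comm] using
        hmem hij (s := -1) (t := -1) (by simp) (by simp)
  · rintro ⟨_, ⟨i, s, hs, rfl⟩, _, ⟨j, t, ht, rfl⟩, hst, rfl⟩
    rcases lt_trichotomy i j with hij | rfl | hij
    · exact single_add_single_mem_PhiD_union_neg hij hs ht
    · rw [single_dotProduct_single, if_pos rfl] at hst
      rcases mul_eq_zero.mp hst with rfl | rfl <;> simp_all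
    · rw [add_comm]
      exact single_add_single_mem_PhiD_union_neg hij ht hs

theorem range_eps_union_neg : Set.range (eps n) ∪ -Set.range (eps n) = signedBasis (Fin n) := by
  ext u
  constructor
  · rintro (⟨i, rfl⟩ | ⟨i, h⟩)
    · exact ⟨i, 1, abs_one, rfl⟩
    · exact ⟨i, -1, by simp, by rw [Pi.single_neg, ← eps, h, neg_neg]⟩
  · rintro ⟨i, s, hs, rfl⟩
    rcases (abs_eq zero_le_one).mp hs with rfl | rfl
    · exact .inl ⟨i, rfl⟩
    · exact .inr ⟨i, by simp [eps, Pi.single_neg]⟩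

theorem PhiA_union_neg_eq : PhiA n ∪ -PhiA n = rootsD (Fin n) ∩ {v | ∑ i, v i = 0} := by
  rw [← PhiD_union_neg_eq_rootsD]
  ext v
  constructor
  · rintro (⟨i, j, hij, rfl⟩ | ⟨i, j, hij, h⟩)
    · exact ⟨.inl ⟨i, j, hij, .inl rfl⟩, by simp [eps]⟩
    · refine ⟨.inr ⟨i, j, hij, .inl h⟩, ?_⟩
      simpa [eps, Finset.sum_neg_distrib] using congrArg (fun w => ∑ k, w k) h
  · rintro ⟨⟨i, j, hij, rfl | rfl⟩ | ⟨i, j, hij, h | h⟩, hv⟩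
    · exact .inl ⟨i, j, hij, rfl⟩
    · norm_num [eps, Finset.sum_add_distrib] at hv
    · exact .inr ⟨i, j, hij, h⟩
    · have := congrArg (fun w => ∑ k, w k) h
      simp [eps, Finset.sum_add_distrib, Finset.sum_neg_distrib] at this
      linarith [show ∑ k, v k = 0 from hv]

theorem PhiB_union_neg_eq : PhiB n ∪ -PhiB n = rootsD (Fin n) ∪ signedBasis (Fin n) := by
  have hB : PhiB n = PhiD n ∪ Set.range (eps n) := by
    ext v
    simp [PhiB, PhiD, eq_comm]
  rw [hB, Set.union_neg, Set.union_union_union_comm, PhiD_union_neg_eq_rootsD,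
    range_eps_union_neg]

theorem PhiC_union_neg_eq :
    PhiC n ∪ -PhiC n = rootsD (Fin n) ∪ (fun u => u + u) '' signedBasis (Fin n) := by
  have hC : PhiC n = PhiD n ∪ (fun u => u + u) '' Set.range (eps n) := by
    ext v
    simp [PhiC, PhiD, eq_comm]
  rw [hC, Set.union_neg, Set.union_union_union_comm, PhiD_union_neg_eq_rootsD,
    ← range_eps_union_neg, Set.image_union,
    Set.image_neg_of_apply_neg_eq_neg fun u _ => (neg_add u u).symm]

theorem obtuseSumClosed_union_neg {Φ : Set (Fin n → ℝ)}
    (hΦ : Φ = PhiA n ∨ Φ = PhiB n ∨ Φ = PhiC n ∨ Φ = PhiD n) : ObtuseSumClosed (Φ ∪ -Φ) := by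
  rcases hΦ with rfl | rfl | rfl | rfl
  · rw [PhiA_union_neg_eq]
    refine obtuseSumClosed_rootsD.inter fun v hv w hw => ?_
    simp_all [Finset.sum_add_distrib]
  · rw [PhiB_union_neg_eq]; exact obtuseSumClosed_rootsB
  · rw [PhiC_union_neg_eq]; exact obtuseSumClosed_rootsC
  · rw [PhiD_union_neg_eq_rootsD]; exact obtuseSumClosed_rootsD

theorem dotProduct_pos_of_mem {ρ : Fin n → ℝ} (hρ : StrictAnti ρ) (hρ₀ : ∀ i, 0 < ρ i)
    {Φ : Set (Fin n → ℝ)} (hΦ : Φ = PhiA n ∨ Φ = PhiB n ∨ Φ = PhiC n ∨ Φ = PhiD n) :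
    ∀ v ∈ Φ, 0 < ρ ⬝ᵥ v := by
  have heps : ∀ i, 0 < ρ ⬝ᵥ eps n i := fun i => by simpa [eps] using hρ₀ i
  have hsub : ∀ i j, i < j → 0 < ρ ⬝ᵥ (eps n i - eps n j) := fun i j hij => by
    simpa [eps, dotProduct_sub] using hρ hij
  have hadd : ∀ i j, 0 < ρ ⬝ᵥ (eps n i + eps n j) := fun i j => by
    rw [dotProduct_add]; exact add_pos (heps i) (heps j)
  have hD : ∀ v ∈ PhiD n, 0 < ρ ⬝ᵥ v := by
    rintro v ⟨i, j, hij, rfl | rfl⟩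
    exacts [hsub i j hij, hadd i j]
  rcases hΦ with rfl | rfl | rfl | rfl
  · rintro v ⟨i, j, hij, rfl⟩
    exact hsub i j hij
  · rintro v (hv | ⟨i, rfl⟩)
    exacts [hD v hv, heps i]
  · rintro v (hv | ⟨i, rfl⟩)
    exacts [hD v hv, hadd i i]
  · exact hD

end ClassicalTypes

theorem partial_sums_in_roots_general (n : ℕ) (Φ : Set (Fin n → ℝ))
    (hΦ : Φ = PhiA n ∨ Φ = PhiB n ∨ Φ = PhiC n ∨ Φ = PhiD n)
    (α β : Fin n → ℝ) (hα : α ∈ Φ) (hβ : β ∈ Φ)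
    (h : ∃ l : List (Fin n → ℝ), l ≠ [] ∧ (∀ γ ∈ l, γ ∈ Φ) ∧ β - α = l.sum) :
    ∃ l : List (Fin n → ℝ), l ≠ [] ∧ (∀ γ ∈ l, γ ∈ Φ) ∧ β = α + l.sum ∧
      ∀ k : ℕ, 1 ≤ k → k ≤ l.length → α + (l.take k).sum ∈ Φ := by
  obtain ⟨l, hne, hl, hsum⟩ := h
  have hρ : StrictAnti fun i : Fin n => (n : ℝ) - i := fun i j hij =>
    sub_lt_sub_left (by exact_mod_cast hij) _
  have hρ₀ : ∀ i : Fin n, 0 < (n : ℝ) - i := fun i => sub_pos.mpr (by exact_mod_cast i.isLt)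
  obtain ⟨l', hperm, hsums⟩ := exists_perm_partialSumsIn (obtuseSumClosed_union_neg hΦ)
    (dotProduct_pos_of_mem hρ hρ₀ hΦ) hα hβ hl (eq_add_of_sub_eq' hsum)
  refine ⟨l', ?_, fun γ hγ => hl γ (hperm.subset hγ), ?_, hsums⟩
  · rintro rfl
    exact hne hperm.symm.eq_nil
  · rw [hperm.sum_eq, ← hsum, add_sub_cancel]

/-- If `α, β ∈ Φ⁺` (a classical positive root set) and `β - α` is a nonempty sum of
elements of `Φ⁺`, then `β = α + γ₁ + ⋯ + γ_u` with all `γ_i ∈ Φ⁺` and every partial sum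
`α + γ₁ + ⋯ + γ_k` (`1 ≤ k ≤ u`) again in `Φ⁺`. -/
theorem partial_sums_in_roots (n : ℕ) (hn : 1 ≤ n) (Φ : Set (Fin n → ℝ))
    (hΦ : Φ = PhiA n ∨ Φ = PhiB n ∨ Φ = PhiC n ∨ Φ = PhiD n)
    (α β : Fin n → ℝ) (hα : α ∈ Φ) (hβ : β ∈ Φ)
    (h : ∃ l : List (Fin n → ℝ), l ≠ [] ∧ (∀ γ ∈ l, γ ∈ Φ) ∧ β - α = l.sum) :
    ∃ l : List (Fin n → ℝ), l ≠ [] ∧ (∀ γ ∈ l, γ ∈ Φ) ∧ β = α + l.sum ∧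
      ∀ k : ℕ, 1 ≤ k → k ≤ l.length → α + (l.take k).sum ∈ Φ :=
  partial_sums_in_roots_general n Φ hΦ α β hα hβ h
end

section
/- For every f ∈ 𝔫*, the subspace m_f spanned by the elementary matrices E_{ij} (1 ≤ i < j ≤ n) for which there is NO pair (a,b) ∈ Supp(f) with a ≤ i and j ≤ b is a Lie ideal of 𝔫; moreover every element f' of the coadjoint orbit N·f vanishes identically on m_f. -/
open Matrix

/-- The Lie algebra `𝔫` of strictly upper triangular `n × n` matrices over `F`,
as a submodule of the matrix space. -/
def strictUpper (F : Type*) [Field F] (n : ℕ) : Submodule F (Matrix (Fin n) (Fin n) F) where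
  carrier := {x | ∀ i j : Fin n, j ≤ i → x i j = 0}
  add_mem' := by
    intro x y hx hy i j hij
    show x i j + y i j = 0
    rw [hx i j hij, hy i j hij, add_zero]
  zero_mem' := by intro i j _; rfl
  smul_mem' := by
    intro c x hx i j hij
    show c * x i j = 0
    rw [hx i j hij, mul_zero]

lemma mul_mem_strictUpper {F : Type*} [Field F] {n : ℕ} {x y : Matrix (Fin n) (Fin n) F}
    (hx : x ∈ strictUpper F n) (hy : y ∈ strictUpper F n) : x * y ∈ strictUpper F n := by
  intro i j hji
  rw [Matrix.mul_apply]
  refine Finset.sum_eq_zero fun k _ => ?_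
  rcases le_or_gt k i with h | h
  · rw [hx i k h, zero_mul]
  · rw [hy k j (hji.trans h.le), mul_zero]

/-- The Lie bracket (commutator) on `𝔫`, as a bilinear map. -/
def commBracket (F : Type*) [Field F] (n : ℕ) :
    strictUpper F n →ₗ[F] strictUpper F n →ₗ[F] strictUpper F n :=
  LinearMap.mk₂ F
    (fun x y => ⟨(x : Matrix (Fin n) (Fin n) F) * y - (y : Matrix (Fin n) (Fin n) F) * x,
      sub_mem (mul_mem_strictUpper x.2 y.2) (mul_mem_strictUpper y.2 x.2)⟩)
    (fun x x' y => by
      apply Subtype.ext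
      show ((x : Matrix (Fin n) (Fin n) F) + x') * y - (y : Matrix (Fin n) (Fin n) F) * (x + x')
          = ((x : Matrix (Fin n) (Fin n) F) * y - (y : Matrix (Fin n) (Fin n) F) * x)
            + ((x' : Matrix (Fin n) (Fin n) F) * y - (y : Matrix (Fin n) (Fin n) F) * x')
      noncomm_ring)
    (fun c x y => by
      apply Subtype.ext
      show (c • (x : Matrix (Fin n) (Fin n) F)) * y - (y : Matrix (Fin n) (Fin n) F) * (c • x)
          = c • ((x : Matrix (Fin n) (Fin n) F) * y - (y : Matrix (Fin n) (Fin n) F) * x)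
      rw [smul_mul_assoc, mul_smul_comm, smul_sub])
    (fun x y y' => by
      apply Subtype.ext
      show (x : Matrix (Fin n) (Fin n) F) * (y + y') - ((y : Matrix (Fin n) (Fin n) F) + y') * x
          = ((x : Matrix (Fin n) (Fin n) F) * y - (y : Matrix (Fin n) (Fin n) F) * x)
            + ((x : Matrix (Fin n) (Fin n) F) * y' - (y' : Matrix (Fin n) (Fin n) F) * x)
      noncomm_ring)
    (fun c x y => by
      apply Subtype.ext
      show (x : Matrix (Fin n) (Fin n) F) * (c • y) - (c • (y : Matrix (Fin n) (Fin n) F)) * x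
          = c • ((x : Matrix (Fin n) (Fin n) F) * y - (y : Matrix (Fin n) (Fin n) F) * x)
      rw [smul_mul_assoc, mul_smul_comm, smul_sub])

/-- The elementary matrix `E_{ij}` (with `i < j`) as an element of `𝔫`. -/
def Eelt (F : Type*) [Field F] (n : ℕ) (i j : Fin n) (h : i < j) : strictUpper F n :=
  ⟨Matrix.single i j 1, by
    intro a b hba
    refine Matrix.single_apply_of_ne i j 1 a b ?_
    rintro ⟨rfl, rfl⟩
    exact absurd h (not_lt.mpr hba)⟩

/-- The support of a linear form `f ∈ 𝔫*`. -/
def Supp (F : Type*) [Field F] (n : ℕ) (f : Module.Dual F (strictUpper F n)) :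
    Set (Fin n × Fin n) :=
  {p | ∃ h : p.1 < p.2, f (Eelt F n p.1 p.2 h) ≠ 0}

/-- A matrix is upper unitriangular if it has `1`'s on the diagonal and
`0`'s below the diagonal. -/
def IsUnitriangular {F : Type*} [Field F] {n : ℕ} (g : Matrix (Fin n) (Fin n) F) : Prop :=
  (∀ i, g i i = 1) ∧ ∀ i j : Fin n, j < i → g i j = 0

/-- The coadjoint orbit `N·f` of a linear form `f ∈ 𝔫*`. -/
def coadjOrbit (F : Type*) [Field F] (n : ℕ) (f : Module.Dual F (strictUpper F n)) :
    Set (Module.Dual F (strictUpper F n)) :=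
  {f' | ∃ g g' : Matrix (Fin n) (Fin n) F, IsUnitriangular g ∧ IsUnitriangular g' ∧
    g * g' = 1 ∧ g' * g = 1 ∧
    ∀ (x : strictUpper F n) (hx : g' * (x : Matrix (Fin n) (Fin n) F) * g ∈ strictUpper F n),
      f' x = f ⟨g' * (x : Matrix (Fin n) (Fin n) F) * g, hx⟩}

/-- The subspace `m_f` spanned by the `E_{ij}` (`i < j`) such that no pair
`(a, b) ∈ Supp f` satisfies `a ≤ i` and `j ≤ b`. -/
def mSubspace (F : Type*) [Field F] (n : ℕ) (f : Module.Dual F (strictUpper F n)) :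
    Submodule F (strictUpper F n) :=
  Submodule.span F
    {x | ∃ (i j : Fin n) (h : i < j), x = Eelt F n i j h ∧
      ¬ ∃ q ∈ Supp F n f, q.1 ≤ i ∧ j ≤ q.2}


/-!
Call `(i, j)` free if no `(a, b) ∈ Supp f` has `a ≤ i` and `j ≤ b`; `m_f` is spanned by the
`E_{ij}` with `(i, j)` free, and freeness passes from `(i, j)` to every `(a, b)` with `a ≤ i`,
`j ≤ b`. For upper triangular `A` and `B`, the nonzero entries of `A * E_{ij} * B` sit at such
positions `(a, b)`. This applies to `[x, E_{ij}] = x * E_{ij} * 1 - 1 * E_{ij} * x`, which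
therefore lies in `m_f`, and to `g⁻¹ * E_{ij} * g`, on which `f` vanishes because `f(E_{ab}) ≠ 0`
means that `(a, b) ∈ Supp f` is not free.
-/

section UpperTriangular

variable {ι R : Type*} [Fintype ι] [DecidableEq ι] [Semiring R]

theorem Matrix.mul_single_mul_apply (A B : Matrix ι ι R) (i j a b : ι) (c : R) :
    (A * single i j c * B) a b = A a i * c * B j b := by
  rw [mul_apply, Finset.sum_eq_single j]
  · rw [mul_single_apply_same]
  · intro k _ hk
    rw [mul_single_apply_of_ne _ _ _ _ _ hk, zero_mul]
  · exact fun h => absurd (Finset.mem_univ j) h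

theorem Matrix.le_and_le_of_mul_single_mul_apply_ne_zero [LinearOrder ι] {A B : Matrix ι ι R}
    (hA : A.IsUpperTriangular) (hB : B.IsUpperTriangular) {i j a b : ι} {c : R}
    (h : (A * single i j c * B) a b ≠ 0) : a ≤ i ∧ j ≤ b := by
  rw [mul_single_mul_apply] at h
  refine ⟨le_of_not_gt fun hia => h ?_, le_of_not_gt fun hbj => h ?_⟩
  · rw [hA hia, zero_mul, zero_mul]
  · rw [hB hbj, mul_zero]

end UpperTriangular

theorem not_exists_le_and_le_of_le {α : Type*} [Preorder α] {s : Set (α × α)} {i j a b : α}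
    (h : ¬∃ q ∈ s, q.1 ≤ i ∧ j ≤ q.2) (ha : a ≤ i) (hb : j ≤ b) :
    ¬∃ q ∈ s, q.1 ≤ a ∧ b ≤ q.2 :=
  fun ⟨q, hq, hqa, hbq⟩ => h ⟨q, hq, hqa.trans ha, hb.trans hbq⟩

section StrictUpper

variable {F : Type*} [Field F] {n : ℕ}

theorem isUpperTriangular_of_mem_strictUpper {x : Matrix (Fin n) (Fin n) F}
    (hx : x ∈ strictUpper F n) : x.IsUpperTriangular :=
  fun _ _ h => hx _ _ h.le

theorem IsUnitriangular.isUpperTriangular {g : Matrix (Fin n) (Fin n) F}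
    (hg : IsUnitriangular g) : g.IsUpperTriangular :=
  fun _ _ h => hg.2 _ _ h

theorem mul_single_mul_mem_strictUpper {A B : Matrix (Fin n) (Fin n) F}
    (hA : A.IsUpperTriangular) (hB : B.IsUpperTriangular) {i j : Fin n} (hij : i < j) (c : F) :
    A * single i j c * B ∈ strictUpper F n := fun a b hba => by
  by_contra hne
  obtain ⟨hai, hjb⟩ := le_and_le_of_mul_single_mul_apply_ne_zero hA hB hne
  exact hba.not_gt (hai.trans_lt (hij.trans_le hjb))

@[simp]
theorem coe_commBracket (x y : strictUpper F n) :
    (commBracket F n x y : Matrix (Fin n) (Fin n) F) = x * y - y * x :=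
  rfl

@[simp]
theorem coe_Eelt {i j : Fin n} (h : i < j) :
    (Eelt F n i j h : Matrix (Fin n) (Fin n) F) = single i j 1 :=
  rfl

theorem eq_sum_Eelt (z : strictUpper F n) :
    z = ∑ p : {p : Fin n × Fin n // p.1 < p.2},
      (z : Matrix (Fin n) (Fin n) F) p.1.1 p.1.2 • Eelt F n p.1.1 p.1.2 p.2 := by
  apply Subtype.ext
  ext a b
  rw [AddSubmonoidClass.coe_finsetSum, Matrix.sum_apply]
  simp only [SetLike.val_smul, Matrix.smul_apply, Eelt, single_apply, smul_eq_mul, mul_ite, mul_one,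
    mul_zero]
  by_cases hab : a < b
  · rw [Finset.sum_eq_single ⟨(a, b), hab⟩]
    · simp
    · rintro ⟨⟨c, d⟩, _⟩ - hne
      refine if_neg ?_
      rintro ⟨rfl, rfl⟩
      exact hne rfl
    · simp
  · rw [z.2 a b (not_lt.1 hab), Finset.sum_eq_zero]
    rintro ⟨⟨c, d⟩, hcd⟩ -
    refine if_neg ?_
    rintro ⟨rfl, rfl⟩
    exact hab hcd

theorem mem_of_forall_Eelt_mem {S : Submodule F (strictUpper F n)} (z : strictUpper F n)
    (h : ∀ a b (hab : a < b), (z : Matrix (Fin n) (Fin n) F) a b ≠ 0 → Eelt F n a b hab ∈ S) :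
    z ∈ S := by
  rw [eq_sum_Eelt z]
  refine Submodule.sum_mem _ fun p _ => ?_
  by_cases hz : (z : Matrix (Fin n) (Fin n) F) p.1.1 p.1.2 = 0
  · rw [hz, zero_smul]
    exact S.zero_mem
  · exact S.smul_mem _ (h _ _ p.2 hz)

theorem le_and_le_of_commBracket_Eelt_apply_ne_zero (x : strictUpper F n) {i j a b : Fin n}
    (hij : i < j) (h : (commBracket F n x (Eelt F n i j hij) : Matrix (Fin n) (Fin n) F) a b ≠ 0) :
    a ≤ i ∧ j ≤ b := by
  have hx := isUpperTriangular_of_mem_strictUpper x.2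
  rw [coe_commBracket, coe_Eelt, Matrix.sub_apply] at h
  by_cases hleft : (x.1 * single i j 1 : Matrix (Fin n) (Fin n) F) a b = 0
  · rw [hleft, zero_sub, neg_ne_zero, ← one_mul (single i j (1 : F))] at h
    exact le_and_le_of_mul_single_mul_apply_ne_zero blockTriangular_one hx h
  · rw [← mul_one (_ * single i j 1)] at hleft
    exact le_and_le_of_mul_single_mul_apply_ne_zero hx blockTriangular_one hleft

variable {f : Module.Dual F (strictUpper F n)} {i j : Fin n}

theorem mem_mSubspace_of_apply_ne_zero (hfree : ¬∃ q ∈ Supp F n f, q.1 ≤ i ∧ j ≤ q.2)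
    (z : strictUpper F n)
    (hz : ∀ a b, (z : Matrix (Fin n) (Fin n) F) a b ≠ 0 → a ≤ i ∧ j ≤ b) :
    z ∈ mSubspace F n f :=
  mem_of_forall_Eelt_mem z fun a b hab hne =>
    Submodule.subset_span ⟨a, b, hab, rfl,
      not_exists_le_and_le_of_le hfree (hz a b hne).1 (hz a b hne).2⟩

theorem dual_apply_eq_zero_of_apply_ne_zero (hfree : ¬∃ q ∈ Supp F n f, q.1 ≤ i ∧ j ≤ q.2)
    (z : strictUpper F n)
    (hz : ∀ a b, (z : Matrix (Fin n) (Fin n) F) a b ≠ 0 → a ≤ i ∧ j ≤ b) :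
    f z = 0 := by
  refine LinearMap.mem_ker.1 (mem_of_forall_Eelt_mem z fun a b hab hne => ?_)
  by_contra hf
  exact not_exists_le_and_le_of_le hfree (hz a b hne).1 (hz a b hne).2
    ⟨(a, b), ⟨hab, hf⟩, le_rfl, le_rfl⟩

end StrictUpper

theorem mSubspace_lieIdeal_and_orbit_vanishes_general (F : Type*) [Field F]
    (n : ℕ) (f : Module.Dual F (strictUpper F n)) :
    (∀ x : strictUpper F n, ∀ y ∈ mSubspace F n f,
        commBracket F n x y ∈ mSubspace F n f) ∧
    (∀ f' ∈ coadjOrbit F n f, ∀ y ∈ mSubspace F n f, f' y = 0) := by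
  constructor
  · intro x y hy
    refine (Submodule.span_le (p := (mSubspace F n f).comap (commBracket F n x))).2 ?_ hy
    rintro _ ⟨i, j, hij, rfl, hfree⟩
    exact mem_mSubspace_of_apply_ne_zero hfree _ fun a b =>
      le_and_le_of_commBracket_Eelt_apply_ne_zero x hij
  · rintro f' ⟨g, g', hg, hg', -, -, hf'⟩ y hy
    refine (Submodule.span_le (p := LinearMap.ker f')).2 ?_ hy
    rintro _ ⟨i, j, hij, rfl, hfree⟩
    have hA := hg'.isUpperTriangular
    have hB := hg.isUpperTriangular
    rw [SetLike.mem_coe, LinearMap.mem_ker,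
      hf' (Eelt F n i j hij) (mul_single_mul_mem_strictUpper hA hB hij 1)]
    exact dual_apply_eq_zero_of_apply_ne_zero hfree _ fun a b =>
      le_and_le_of_mul_single_mul_apply_ne_zero hA hB

/-- `m_f` is a Lie ideal of `𝔫`, and every element of the coadjoint orbit `N·f`
vanishes identically on `m_f`. -/
theorem mSubspace_lieIdeal_and_orbit_vanishes (F : Type*) [Field F] [IsAlgClosed F] [CharZero F]
    (n : ℕ) (hn : 2 ≤ n) (f : Module.Dual F (strictUpper F n)) :
    (∀ x : strictUpper F n, ∀ y ∈ mSubspace F n f,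
        commBracket F n x y ∈ mSubspace F n f) ∧
    (∀ f' ∈ coadjOrbit F n f, ∀ y ∈ mSubspace F n f, f' y = 0) :=
  mSubspace_lieIdeal_and_orbit_vanishes_general F n f
end

section
/- Let n ≥ 3 and let f ∈ 𝔫* satisfy f(E_{i,i+2}) ≠ 0 for every 1 ≤ i ≤ n − 2. Then rk B_f ≥ 2⌊(n−1)/2⌋. -/
/-!
Put `x k = E_{2k,2k+1}` and `y k = E_{2k+1,2k+2}` for `k < ⌊(n-1)/2⌋`. The `y k` commute with
each other, while `f [x k, y l]` vanishes for `k < l` and equals `f (E_{2k,2k+2}) ≠ 0` for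
`k = l`. So the Gram matrix of `B_f` between the families `x ⊔ y` and `y ⊔ x` is block triangular with
invertible triangular diagonal blocks, and the `2⌊(n-1)/2⌋` functionals `B_f (x k, ·)`,
`B_f (y k, ·)` are linearly independent.
-/

open Matrix

/-- The rank of the alternating bilinear form `B_f(x, y) = f([x, y])` on `𝔫`,
i.e. the rank of the linear map `𝔫 → 𝔫*`, `x ↦ B_f(x, ·)`. -/
noncomputable def rkB (F : Type*) [Field F] (n : ℕ) (f : Module.Dual F (strictUpper F n)) : ℕ :=
  Module.finrank F (LinearMap.range (LinearMap.compr₂ (commBracket F n) f))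

section GramMatrix

variable {K V W ι : Type*} [Field K] [AddCommGroup V] [Module K V] [AddCommGroup W] [Module K W]
  [Fintype ι]

theorem LinearMap.linearIndependent_of_det_ne_zero [DecidableEq ι] (B : V →ₗ[K] W →ₗ[K] K)
    (v : ι → V) (u : ι → W) (h : (Matrix.of fun i j => B (v i) (u j)).det ≠ 0) :
    LinearIndependent K (fun i => B (v i)) :=
  LinearIndependent.of_comp (LinearMap.pi fun j => LinearMap.applyₗ (u j))
    (Matrix.linearIndependent_rows_of_det_ne_zero h)

theorem LinearMap.linearIndependent_sumElim_of_isotropic [DecidableEq ι]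
    (B : V →ₗ[K] V →ₗ[K] K) (hB : ∀ a b, B a b = -B b a) (x y : ι → V)
    (hy : ∀ i j, B (y i) (y j) = 0)
    (hxy : (Matrix.of fun i j => B (x i) (y j)).det ≠ 0) :
    LinearIndependent K (fun i => B (Sum.elim x y i)) := by
  set M := Matrix.of fun i j => B (x i) (y j)
  have hgram : (Matrix.of fun i j => B (Sum.elim x y i) (Sum.elim y x j)) =
      Matrix.fromBlocks M (Matrix.of fun i j => B (x i) (x j)) 0 (-Mᵀ) := by
    ext (i | i) (j | j) <;> simp [M, hy, hB (y i)]
  refine B.linearIndependent_of_det_ne_zero _ (Sum.elim y x) ?_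
  rw [hgram, Matrix.det_fromBlocks_zero₂₁, Matrix.det_neg, Matrix.det_transpose]
  exact mul_ne_zero hxy (mul_ne_zero (pow_ne_zero _ (neg_ne_zero.mpr one_ne_zero)) hxy)

theorem LinearMap.card_le_finrank_range [FiniteDimensional K V] (g : V →ₗ[K] W) (v : ι → V)
    (h : LinearIndependent K (fun i => g (v i))) :
    Fintype.card ι ≤ Module.finrank K (LinearMap.range g) := by
  let w : ι → LinearMap.range g := fun i => ⟨g (v i), LinearMap.mem_range_self g (v i)⟩
  have hw : LinearIndependent K w := .of_comp (LinearMap.range g).subtype h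
  exact hw.fintype_card_le_finrank

end GramMatrix

section StrictUpper

variable {F : Type*} [Field F] {n : ℕ}

theorem commBracket_swap (x y : strictUpper F n) : commBracket F n x y = -commBracket F n y x :=
  Subtype.ext (neg_sub _ _).symm

theorem commBracket_Eelt_of_ne {a b c d : Fin n} (hab : a < b) (hcd : c < d) (hbc : b ≠ c)
    (hda : d ≠ a) : commBracket F n (Eelt F n a b hab) (Eelt F n c d hcd) = 0 := by
  apply Subtype.ext
  change Matrix.single a b (1 : F) * Matrix.single c d 1 -
    Matrix.single c d 1 * Matrix.single a b 1 = 0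
  rw [Matrix.single_mul_single_of_ne (h := hbc), Matrix.single_mul_single_of_ne (h := hda),
    sub_zero]

theorem commBracket_Eelt_same {a b d : Fin n} (hab : a < b) (hbd : b < d) (hda : d ≠ a) :
    commBracket F n (Eelt F n a b hab) (Eelt F n b d hbd) = Eelt F n a d (hab.trans hbd) := by
  apply Subtype.ext
  change Matrix.single a b (1 : F) * Matrix.single b d 1 -
    Matrix.single b d 1 * Matrix.single a b 1 = Matrix.single a d 1
  rw [Matrix.single_mul_single_same, Matrix.single_mul_single_of_ne (h := hda), sub_zero, one_mul]

def superdiagElt (F : Type*) [Field F] (n i : ℕ) (h : i + 1 < n) : strictUpper F n :=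
  Eelt F n ⟨i, by omega⟩ ⟨i + 1, h⟩ (Fin.mk_lt_mk.mpr i.lt_succ_self)

theorem commBracket_superdiagElt_of_ne {i j : ℕ} (hi : i + 1 < n) (hj : j + 1 < n)
    (hij : i + 1 ≠ j) (hji : j + 1 ≠ i) :
    commBracket F n (superdiagElt F n i hi) (superdiagElt F n j hj) = 0 :=
  commBracket_Eelt_of_ne _ _ (by simpa [Fin.ext_iff]) (by simpa [Fin.ext_iff])

theorem commBracket_superdiagElt_succ {i : ℕ} (hi : i + 1 < n) (hi' : i + 2 < n) :
    commBracket F n (superdiagElt F n i hi) (superdiagElt F n (i + 1) hi') =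
      Eelt F n ⟨i, by omega⟩ ⟨i + 2, hi'⟩ (Fin.mk_lt_mk.mpr (by omega)) :=
  commBracket_Eelt_same _ _ (by simp [Fin.ext_iff]; omega)

end StrictUpper

/-- If `f (E_{i,i+2}) ≠ 0` for every `i`, then `rk B_f ≥ 2⌊(n-1)/2⌋`. -/
theorem rkB_ge_of_superdiag (F : Type*) [Field F]
    (n : ℕ) (f : Module.Dual F (strictUpper F n))
    (hf : ∀ (i : Fin n) (h2 : (i : ℕ) + 2 < n),
      f (Eelt F n i ⟨(i : ℕ) + 2, h2⟩ (by simp only [Fin.lt_def, Fin.val_mk]; omega)) ≠ 0) :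
    2 * ((n - 1) / 2) ≤ rkB F n f := by
  set m := (n - 1) / 2
  let x : Fin m → strictUpper F n := fun k => superdiagElt F n (2 * k) (by omega)
  let y : Fin m → strictUpper F n := fun k => superdiagElt F n (2 * k + 1) (by omega)
  let B := (commBracket F n).compr₂ f
  have hB : ∀ a b, B a b = -B b a := fun a b => by
    simp only [B, LinearMap.compr₂_apply, commBracket_swap a b, map_neg]
  have hy : ∀ k l, B (y k) (y l) = 0 := fun k l => by
    simp only [B, y, LinearMap.compr₂_apply]
    rw [commBracket_superdiagElt_of_ne _ _ (by omega) (by omega), map_zero]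
  have hxy : (Matrix.of fun k l => B (x k) (y l)).det ≠ 0 := by
    rw [Matrix.det_of_isLowerTriangular]
    · exact Finset.prod_ne_zero_iff.mpr fun k _ => by
        simpa [B, x, y, commBracket_superdiagElt_succ] using
          hf ⟨2 * k, by omega⟩ (by simp only; omega)
    · intro k l hkl
      have hkl : (k : ℕ) < l := hkl
      simp only [B, x, y, Matrix.of_apply, LinearMap.compr₂_apply]
      rw [commBracket_superdiagElt_of_ne _ _ (by omega) (by omega), map_zero]
  calc 2 * m = Fintype.card (Fin m ⊕ Fin m) := by simp [two_mul]
    _ ≤ rkB F n f :=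
      B.card_le_finrank_range _ (B.linearIndependent_sumElim_of_isotropic hB x y hy hxy)
end

section
/- Let F be a field, m ≥ 1, and let M be an m×m matrix over F with Mᵀ = −M and all diagonal entries zero, such that M_{i,i+1} ≠ 0 for every 1 ≤ i ≤ m−1 and M_{ij} = 0 whenever j > i + 1. Then the rank of M equals 2⌊m/2⌋. -/
/-!
Such a matrix is supported exactly on the edges of the path graph on `Fin m`. Every edge joins
indices of different parity, so a nonzero term of the Leibniz expansion of `det M` would need a
permutation exchanging the even and the odd indices; for odd `m` there is none, and `M` is
singular. Conversely, row `i + 1` of `M y = 0` shows that `y i` and `y (i + 2)` vanish together,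
while rows `0` and `m - 1` force `y 1 = 0` and `y (m - 2) = 0`. Hence a kernel vector is
determined by `y 0`, and vanishes altogether when `m` is even: the kernel has dimension `m % 2`.
-/

open Matrix SimpleGraph Module

theorem Equiv.Perm.even_card_of_forall_apply_ne {α : Type*} [Fintype α] (σ : Equiv.Perm α)
    (c : α → Bool) (hσ : ∀ a, c (σ a) ≠ c a) : Even (Fintype.card α) := by
  have hswap : Fintype.card {a // c a = true} = Fintype.card {a // c a = false} :=
    Fintype.card_congr <| σ.symm.subtypeEquiv fun a => by
      have := hσ (σ.symm a)
      rw [Equiv.apply_symm_apply] at this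
      revert this
      cases c a <;> cases c (σ.symm a) <;> simp
  have hsplit := Fintype.card_subtype_compl (fun a => c a = true)
  simp only [Bool.not_eq_true] at hsplit
  have := Fintype.card_subtype_le (fun a => c a = true)
  exact ⟨Fintype.card {a // c a = true}, by omega⟩

namespace Matrix

theorem det_eq_zero_of_bipartite_of_odd_card {α R : Type*} [Fintype α] [DecidableEq α]
    [CommRing R] (M : Matrix α α R) (c : α → Bool) (hM : ∀ i j, c i = c j → M i j = 0)
    (hα : Odd (Fintype.card α)) : M.det = 0 := by
  rw [det_apply]
  refine Finset.sum_eq_zero fun σ _ => ?_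
  obtain ⟨a, ha⟩ : ∃ a, c (σ a) = c a := by
    by_contra! h
    exact Nat.not_even_iff_odd.mpr hα (σ.even_card_of_forall_apply_ne c h)
  exact smul_eq_zero_of_right _ (Finset.prod_eq_zero (Finset.mem_univ a) (hM _ _ ha))

def HasPathSupport {R : Type*} [Zero R] {m : ℕ} (M : Matrix (Fin m) (Fin m) R) : Prop :=
  ∀ i j, M i j ≠ 0 ↔ (pathGraph m).Adj i j

namespace HasPathSupport

variable {F : Type*} [Field F] {m : ℕ} {M : Matrix (Fin m) (Fin m) F}

theorem mulVec_apply (hM : M.HasPathSupport) (y : Fin m → F) {i j k : Fin m}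
    (hij : (i : ℕ) + 1 = j) (hjk : (j : ℕ) + 1 = k) :
    (M *ᵥ y) j = M j i * y i + M j k * y k := by
  refine Fintype.sum_eq_add i k (by omega) fun l hl => ?_
  refine mul_eq_zero_of_left (not_ne_iff.mp fun h => ?_) _
  rw [hM j l, pathGraph_adj] at h
  omega

theorem apply_eq_zero_of_mulVec_eq_zero_of_forall_adj_iff (hM : M.HasPathSupport)
    {y : Fin m → F} (hy : M *ᵥ y = 0) {j k : Fin m}
    (hk : ∀ l, (pathGraph m).Adj j l ↔ l = k) : y k = 0 := by
  have hrow : (M *ᵥ y) j = M j k * y k :=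
    Fintype.sum_eq_single k fun l hl =>
      mul_eq_zero_of_left (not_ne_iff.mp (mt (hM j l).mp (mt (hk l).mp hl))) _
  rw [hy, Pi.zero_apply, eq_comm, mul_eq_zero] at hrow
  exact hrow.resolve_left ((hM j k).mpr ((hk k).mpr rfl))

theorem apply_eq_zero_iff_of_mulVec_eq_zero (hM : M.HasPathSupport) {y : Fin m → F}
    (hy : M *ᵥ y = 0) {i k : Fin m} (hik : (i : ℕ) + 2 = k) : y i = 0 ↔ y k = 0 := by
  obtain ⟨j, hj⟩ : ∃ j : Fin m, (j : ℕ) = i + 1 := ⟨⟨i + 1, by omega⟩, rfl⟩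
  have hrow : M j i * y i + M j k * y k = 0 := by
    rw [← hM.mulVec_apply y hj.symm (by omega), hy, Pi.zero_apply]
  have hji : M j i ≠ 0 := (hM j i).mpr (pathGraph_adj.mpr (Or.inr hj.symm))
  have hjk : M j k ≠ 0 := (hM j k).mpr (pathGraph_adj.mpr (Or.inl (by omega)))
  constructor <;> intro h <;> simp_all

theorem apply_eq_zero_iff_of_mulVec_eq_zero_of_mod_two_eq (hM : M.HasPathSupport)
    {y : Fin m → F} (hy : M *ᵥ y = 0) {i k : Fin m} (hik : (i : ℕ) % 2 = k % 2) :
    y i = 0 ↔ y k = 0 := by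
  suffices h : ∀ (d : ℕ) (i k : Fin m), (k : ℕ) = i + 2 * d → (y i = 0 ↔ y k = 0) by
    rcases le_total (i : ℕ) k with hle | hle
    · exact h ((k - i) / 2) i k (by omega)
    · exact (h ((i - k) / 2) k i (by omega)).symm
  intro d
  induction d with
  | zero => intro i k hk; rw [Fin.ext (by omega : (i : ℕ) = k)]
  | succ d ih =>
    intro i k hk
    exact (ih i ⟨i + 2 * d, by omega⟩ rfl).trans
      (hM.apply_eq_zero_iff_of_mulVec_eq_zero hy (by simp only; omega))

theorem eq_zero_of_mulVec_eq_zero (hM : M.HasPathSupport) {y : Fin m → F} (hy : M *ᵥ y = 0)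
    (hm : 0 < m) (h₀ : y ⟨0, hm⟩ = 0) : y = 0 := by
  funext i
  rcases Nat.mod_two_eq_zero_or_one i with hi | hi
  · exact (hM.apply_eq_zero_iff_of_mulVec_eq_zero_of_mod_two_eq hy (k := ⟨0, hm⟩) hi).mpr h₀
  · have h₁ : y ⟨1, by omega⟩ = 0 :=
      hM.apply_eq_zero_of_mulVec_eq_zero_of_forall_adj_iff hy (j := ⟨0, hm⟩) fun l => by
        rw [pathGraph_adj, Fin.ext_iff]
        simp only
        omega
    exact (hM.apply_eq_zero_iff_of_mulVec_eq_zero_of_mod_two_eq hy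
      (k := ⟨1, by omega⟩) hi).mpr h₁

theorem eq_zero_of_mulVec_eq_zero_of_even (hM : M.HasPathSupport) {y : Fin m → F}
    (hy : M *ᵥ y = 0) (hm : Even m) : y = 0 := by
  obtain rfl | hm₀ := Nat.eq_zero_or_pos m
  · exact Subsingleton.elim _ _
  have h₂ : 2 ≤ m := by grind
  have hlast : y ⟨m - 2, by omega⟩ = 0 :=
    hM.apply_eq_zero_of_mulVec_eq_zero_of_forall_adj_iff hy (j := ⟨m - 1, by omega⟩) fun l => by
      rw [pathGraph_adj, Fin.ext_iff]
      simp only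
      omega
  refine hM.eq_zero_of_mulVec_eq_zero hy hm₀ ?_
  exact (hM.apply_eq_zero_iff_of_mulVec_eq_zero_of_mod_two_eq hy (by simp only; grind)).mpr hlast

theorem det_eq_zero_of_odd (hM : M.HasPathSupport) (hm : Odd m) : M.det = 0 := by
  refine det_eq_zero_of_bipartite_of_odd_card M (fun i => decide (Even (i : ℕ)))
    (fun i j hij => ?_) (by rwa [Fintype.card_fin])
  by_contra h
  rw [← ne_eq, hM i j, pathGraph_adj] at h
  simp only [decide_eq_decide] at hij
  rcases h with h | h <;> rw [← h, Nat.even_add_one] at hij <;> tauto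

theorem finrank_ker_mulVecLin (hM : M.HasPathSupport) :
    finrank F (LinearMap.ker M.mulVecLin) = m % 2 := by
  rcases Nat.even_or_odd m with hm | hm
  · rw [Nat.even_iff.mp hm, Submodule.finrank_eq_zero, Submodule.eq_bot_iff]
    exact fun y hy => hM.eq_zero_of_mulVec_eq_zero_of_even hy hm
  rw [Nat.odd_iff.mp hm]
  have hm₀ : 0 < m := hm.pos
  have hle : finrank F (LinearMap.ker M.mulVecLin) ≤ 1 := by
    refine (LinearMap.finrank_le_finrank_of_injective
      (f := (LinearMap.proj ⟨0, hm₀⟩).domRestrict (LinearMap.ker M.mulVecLin)) ?_).trans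
      (finrank_self F).le
    rw [← LinearMap.ker_eq_bot, Submodule.eq_bot_iff]
    exact fun y hy => Subtype.ext (hM.eq_zero_of_mulVec_eq_zero y.2 hm₀ hy)
  have hpos : 0 < finrank F (LinearMap.ker M.mulVecLin) := by
    obtain ⟨y, hy₀, hy⟩ := exists_mulVec_eq_zero_iff.mpr (hM.det_eq_zero_of_odd hm)
    exact finrank_pos_iff_exists_ne_zero.mpr
      ⟨⟨y, hy⟩, fun h => hy₀ (congrArg Subtype.val h)⟩
  omega

theorem rank_eq (hM : M.HasPathSupport) : M.rank = 2 * (m / 2) := by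
  have := LinearMap.finrank_range_add_finrank_ker M.mulVecLin
  rw [hM.finrank_ker_mulVecLin, finrank_fin_fun] at this
  rw [Matrix.rank]
  omega

end HasPathSupport

theorem hasPathSupport_of_alternating {R : Type*} [AddGroup R] {m : ℕ}
    {M : Matrix (Fin m) (Fin m) R} (hskew : Mᵀ = -M) (hdiag : ∀ i, M i i = 0)
    (hsuper : ∀ (i : Fin m) (h : (i : ℕ) + 1 < m), M i ⟨(i : ℕ) + 1, h⟩ ≠ 0)
    (hzero : ∀ i j : Fin m, (i : ℕ) + 1 < (j : ℕ) → M i j = 0) : M.HasPathSupport := by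
  have hswap (i j : Fin m) : M j i = -M i j := congrFun (congrFun hskew i) j
  intro i j
  rw [pathGraph_adj]
  constructor
  · intro h
    by_contra! hne
    rcases lt_trichotomy (i : ℕ) j with hij | hij | hij
    · exact h (hzero i j (by omega))
    · exact h (Fin.ext hij ▸ hdiag i)
    · exact h (by rw [← neg_eq_zero, ← hswap, hzero j i (by omega)])
  · rintro (h | h)
    · exact (Fin.ext h : (⟨i + 1, h ▸ j.2⟩ : Fin m) = j) ▸ hsuper i (h ▸ j.2)
    · rw [← neg_ne_zero, ← hswap]
      exact (Fin.ext h : (⟨j + 1, h ▸ i.2⟩ : Fin m) = i) ▸ hsuper j (h ▸ i.2)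

end Matrix

theorem rank_alternating_tridiagonal_general (F : Type*) [Field F] (m : ℕ)
    (M : Matrix (Fin m) (Fin m) F)
    (hskew : Mᵀ = -M) (hdiag : ∀ i, M i i = 0)
    (hsuper : ∀ (i : Fin m) (h : (i : ℕ) + 1 < m), M i ⟨(i : ℕ) + 1, h⟩ ≠ 0)
    (hzero : ∀ i j : Fin m, (i : ℕ) + 1 < (j : ℕ) → M i j = 0) :
    M.rank = 2 * (m / 2) :=
  (hasPathSupport_of_alternating hskew hdiag hsuper hzero).rank_eq

/-- An alternating tridiagonal `m × m` matrix whose superdiagonal entries are all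
nonzero has rank `2⌊m/2⌋`. -/
theorem rank_alternating_tridiagonal (F : Type*) [Field F] (m : ℕ) (hm : 1 ≤ m)
    (M : Matrix (Fin m) (Fin m) F)
    (hskew : Mᵀ = -M) (hdiag : ∀ i, M i i = 0)
    (hsuper : ∀ (i : Fin m) (h : (i : ℕ) + 1 < m), M i ⟨(i : ℕ) + 1, h⟩ ≠ 0)
    (hzero : ∀ i j : Fin m, (i : ℕ) + 1 < (j : ℕ) → M i j = 0) :
    M.rank = 2 * (m / 2) :=
  rank_alternating_tridiagonal_general F m M hskew hdiag hsuper hzero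
end

section
/- For 1 ≤ i ≤ n, let f ∈ 𝔫* be the coordinate functional x ↦ x_{i, 2n+1−i}. Then the rank of the alternating bilinear form B_f(x,y) = f(xy − yx) on 𝔫 equals 2(n − i). (Equivalently, the coadjoint orbit of the dual root vector e*_{2ε_i} for the nilradical of a Borel subalgebra of 𝔰𝔭_{2n}(F) has dimension |Sing(2ε_i)| = 2(n − i).) -/
open Matrix

/-- The Gram matrix of the symplectic form `β` on `F^{2n}`:
`S_{a, 2n+1-a} = 1` for `1 ≤ a ≤ n`, `S_{a, 2n+1-a} = -1` for `n+1 ≤ a ≤ 2n`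
(written 0-based). -/
noncomputable def sympS (F : Type*) [Field F] (n : ℕ) :
    Matrix (Fin (2 * n)) (Fin (2 * n)) F :=
  Matrix.of fun a b =>
    if (a : ℕ) + (b : ℕ) = 2 * n - 1 then (if (a : ℕ) < n then 1 else -1) else 0

/-- The nilradical `𝔫` of the Borel subalgebra of upper triangular matrices in
`𝔰𝔭_{2n}(F)`: strictly upper triangular matrices `x` with `xᵀ S + S x = 0`. -/
noncomputable def spNilradical (F : Type*) [Field F] (n : ℕ) :
    Submodule F (Matrix (Fin (2 * n)) (Fin (2 * n)) F) where
  carrier := {x | (∀ i j : Fin (2 * n), j ≤ i → x i j = 0) ∧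
    xᵀ * sympS F n + sympS F n * x = 0}
  add_mem' := by
    intro x y hx hy
    refine ⟨fun i j hij => ?_, ?_⟩
    · show x i j + y i j = 0
      rw [hx.1 i j hij, hy.1 i j hij, add_zero]
    · have h : (x + y)ᵀ * sympS F n + sympS F n * (x + y)
          = (xᵀ * sympS F n + sympS F n * x) + (yᵀ * sympS F n + sympS F n * y) := by
        rw [Matrix.transpose_add, Matrix.add_mul, Matrix.mul_add]
        abel
      rw [h, hx.2, hy.2, add_zero]
  zero_mem' := by
    refine ⟨fun i j _ => rfl, ?_⟩
    simp
  smul_mem' := by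
    intro c x hx
    refine ⟨fun i j hij => ?_, ?_⟩
    · show c * x i j = 0
      rw [hx.1 i j hij, mul_zero]
    · have h : (c • x)ᵀ * sympS F n + sympS F n * (c • x)
          = c • (xᵀ * sympS F n + sympS F n * x) := by
        rw [Matrix.transpose_smul, Matrix.smul_mul, Matrix.mul_smul, smul_add]
      rw [h, hx.2, smul_zero]

/-- The alternating bilinear form `B_f(x, y) = f(xy - yx)` on `𝔫`, for the coordinate
functional `f : x ↦ x_{i'j'}`. -/
noncomputable def spBform (F : Type*) [Field F] (n : ℕ) (i' j' : Fin (2 * n)) :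
    spNilradical F n →ₗ[F] spNilradical F n →ₗ[F] F :=
  LinearMap.mk₂ F
    (fun x y => ((x : Matrix (Fin (2 * n)) (Fin (2 * n)) F) * y
      - (y : Matrix (Fin (2 * n)) (Fin (2 * n)) F) * x) i' j')
    (fun x x' y => by
      simp only [Submodule.coe_add, Matrix.add_mul, Matrix.mul_add,
        Matrix.sub_apply, Matrix.add_apply]
      ring)
    (fun c x y => by
      simp only [Submodule.coe_smul, Matrix.smul_mul, Matrix.mul_smul,
        Matrix.sub_apply, Matrix.smul_apply, smul_eq_mul]
      ring)
    (fun x y y' => by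
      simp only [Submodule.coe_add, Matrix.add_mul, Matrix.mul_add,
        Matrix.sub_apply, Matrix.add_apply]
      ring)
    (fun c x y => by
      simp only [Submodule.coe_smul, Matrix.smul_mul, Matrix.mul_smul,
        Matrix.sub_apply, Matrix.smul_apply, smul_eq_mul]
      ring)

/-! Only row `a` and column `a.rev` of `x, y ∈ 𝔫` enter `B(x, y) = (xy - yx)_{a, a.rev}`, and the
symplectic condition expresses column `a.rev` through row `a`. Hence
`B(x, y) = 2 ∑ ± x_{a,t} y_{a,t.rev}`, the sum running over `a < t < a.rev`: `B` is the pullback,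
along the surjective row projection `𝔫 → F^{(a, a.rev)}`, of a nondegenerate pairing, so its rank
is the number of such `t`. -/

section BilinearRank

variable {K V W : Type*} [Field K] [AddCommMonoid V] [Module K V] [AddCommMonoid W] [Module K W]

theorem LinearMap.finrank_range_compl₁₂_of_surjective (g : W →ₗ[K] W →ₗ[K] K) {π : V →ₗ[K] W}
    (hπ : Function.Surjective π) :
    Module.finrank K (LinearMap.range (g.compl₁₂ π π)) = Module.finrank K (LinearMap.range g) := by
  have h : g.compl₁₂ π π = (π.dualMap ∘ₗ g) ∘ₗ π := rfl
  rw [h, LinearMap.range_comp_of_range_eq_top _ (LinearMap.range_eq_top.mpr hπ),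
    LinearMap.range_comp]
  exact (LinearEquiv.finrank_eq (Submodule.equivMapOfInjective _
    (LinearMap.dualMap_injective_of_surjective hπ) _)).symm

end BilinearRank

section TwistedPairing

variable {K ι : Type*} [Field K] [Fintype ι]

def twistedPairing (σ : Equiv.Perm ι) (c : ι → K) : (ι → K) →ₗ[K] (ι → K) →ₗ[K] K :=
  LinearMap.mk₂ K (fun u v => ∑ k, c k * u k * v (σ k))
    (fun u u' v => by simp only [Pi.add_apply, mul_add, add_mul, Finset.sum_add_distrib])
    (fun a u v => by
      simp only [Pi.smul_apply, smul_eq_mul, Finset.mul_sum]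
      exact Finset.sum_congr rfl fun _ _ => by ring)
    (fun u v v' => by simp only [Pi.add_apply, mul_add, Finset.sum_add_distrib])
    (fun a u v => by
      simp only [Pi.smul_apply, smul_eq_mul, Finset.mul_sum]
      exact Finset.sum_congr rfl fun _ _ => by ring)

theorem twistedPairing_apply (σ : Equiv.Perm ι) (c : ι → K) (u v : ι → K) :
    twistedPairing σ c u v = ∑ k, c k * u k * v (σ k) := rfl

theorem twistedPairing_apply_single [DecidableEq ι] (σ : Equiv.Perm ι) (c : ι → K) (u : ι → K)
    (k : ι) :
    twistedPairing σ c u (Pi.single (σ k) 1) = c k * u k := by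
  simp [twistedPairing_apply, Pi.single_apply, σ.injective.eq_iff]

theorem twistedPairing_injective (σ : Equiv.Perm ι) {c : ι → K} (hc : ∀ k, c k ≠ 0) :
    Function.Injective (twistedPairing σ c) := by
  classical
  refine (injective_iff_map_eq_zero _).mpr fun u hu => funext fun k => ?_
  have h := twistedPairing_apply_single σ c u k
  rw [hu, LinearMap.zero_apply] at h
  exact (mul_eq_zero.mp h.symm).resolve_left (hc k)

end TwistedPairing

section Symplectic

variable {F : Type*} [Field F] {n : ℕ}

variable (F) in
def spSign (a : Fin (2 * n)) : F := if (a : ℕ) < n then 1 else -1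

theorem spSign_rev (a : Fin (2 * n)) : spSign F a.rev = -spSign F a := by
  have := a.isLt
  simp only [spSign, Fin.val_rev]
  split_ifs <;> first | omega | simp

theorem spSign_mul_self (a : Fin (2 * n)) : spSign F a * spSign F a = 1 := by
  unfold spSign; split_ifs <;> norm_num

theorem spSign_ne_zero (a : Fin (2 * n)) : spSign F a ≠ 0 :=
  left_ne_zero_of_mul_eq_one (spSign_mul_self a)

theorem sympS_apply (a b : Fin (2 * n)) :
    sympS F n a b = if b = a.rev then spSign F a else 0 := by
  have := a.isLt
  simp only [sympS, Matrix.of_apply, spSign, Fin.ext_iff, Fin.val_rev]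
  split_ifs <;> first | rfl | omega

theorem sympS_mul_apply (M : Matrix (Fin (2 * n)) (Fin (2 * n)) F) (a b : Fin (2 * n)) :
    (sympS F n * M) a b = spSign F a * M a.rev b := by
  simp [Matrix.mul_apply, sympS_apply, ite_mul]

theorem mul_sympS_apply (M : Matrix (Fin (2 * n)) (Fin (2 * n)) F) (a b : Fin (2 * n)) :
    (M * sympS F n) a b = M a b.rev * spSign F b.rev := by
  simp [Matrix.mul_apply, sympS_apply, mul_ite, eq_comm (a := b), Fin.rev_eq_iff]

theorem sympS_mul_sympS : sympS F n * sympS F n = -1 := by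
  ext a b
  rw [sympS_mul_apply, sympS_apply, Fin.rev_rev, spSign_rev, Matrix.neg_apply, Matrix.one_apply]
  by_cases h : a = b
  · simp [h, spSign_mul_self]
  · simp [h, Ne.symm h]

-- Since `S * S = -1`, this is `S⁻¹ Mᵀ S`, the adjoint with respect to the symplectic form.
variable (F) in
noncomputable def spAdjoint (M : Matrix (Fin (2 * n)) (Fin (2 * n)) F) :
    Matrix (Fin (2 * n)) (Fin (2 * n)) F :=
  -(sympS F n * Mᵀ * sympS F n)

theorem spAdjoint_apply (M : Matrix (Fin (2 * n)) (Fin (2 * n)) F) (a b : Fin (2 * n)) :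
    spAdjoint F M a b = spSign F a * spSign F b * M b.rev a.rev := by
  rw [spAdjoint, Matrix.neg_apply, mul_sympS_apply, sympS_mul_apply, Matrix.transpose_apply,
    spSign_rev]
  ring

theorem transpose_mul_sympS_add_eq_zero_iff (x : Matrix (Fin (2 * n)) (Fin (2 * n)) F) :
    xᵀ * sympS F n + sympS F n * x = 0 ↔ spAdjoint F x = -x := by
  have h : xᵀ * sympS F n + sympS F n * x = sympS F n * (spAdjoint F x + x) := by
    simp only [spAdjoint, Matrix.mul_add, Matrix.mul_neg, ← Matrix.mul_assoc, sympS_mul_sympS,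
      neg_mul, one_mul, neg_neg]
  rw [h, ← add_eq_zero_iff_eq_neg]
  refine ⟨fun h0 => ?_, fun h0 => by rw [h0, Matrix.mul_zero]⟩
  simpa [← Matrix.mul_assoc, sympS_mul_sympS] using congrArg (fun M => -(sympS F n * M)) h0

theorem mem_spNilradical_iff (x : Matrix (Fin (2 * n)) (Fin (2 * n)) F) :
    x ∈ spNilradical F n ↔ (∀ a b, b ≤ a → x a b = 0) ∧ spAdjoint F x = -x := by
  rw [← transpose_mul_sympS_add_eq_zero_iff]
  rfl

theorem apply_rev_of_mem_spNilradical {x : Matrix (Fin (2 * n)) (Fin (2 * n)) F}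
    (hx : x ∈ spNilradical F n) (t a : Fin (2 * n)) :
    x t a.rev = spSign F t * spSign F a * x a t.rev := by
  have h := congrFun (congrFun ((mem_spNilradical_iff x).mp hx).2 t) a.rev
  rw [spAdjoint_apply, Fin.rev_rev, spSign_rev, Matrix.neg_apply] at h
  linear_combination h

theorem sub_spAdjoint_mem_spNilradical {y : Matrix (Fin (2 * n)) (Fin (2 * n)) F}
    (hy : ∀ a b, b ≤ a → y a b = 0) : y - spAdjoint F y ∈ spNilradical F n := by
  refine (mem_spNilradical_iff _).mpr ⟨fun a b hba => ?_, ?_⟩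
  · rw [Matrix.sub_apply, spAdjoint_apply, hy a b hba, hy _ _ (Fin.rev_le_rev.mpr hba)]
    ring
  · ext a b
    simp only [Matrix.sub_apply, Matrix.neg_apply, spAdjoint_apply, Fin.rev_rev, spSign_rev]
    linear_combination (-y a b) * spSign_mul_self (F := F) a
      - y a b * spSign F a * spSign F a * spSign_mul_self (F := F) b

end Symplectic

theorem Fin.rev_mem_Ioo_rev {m : ℕ} {a t : Fin m} (ht : t ∈ Finset.Ioo a a.rev) :
    t.rev ∈ Finset.Ioo a a.rev := by
  rw [Finset.mem_Ioo] at ht ⊢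
  exact ⟨Fin.lt_rev_iff.mpr ht.2, Fin.rev_lt_rev.mpr ht.1⟩

def Fin.revIoo {m : ℕ} (a : Fin m) : Equiv.Perm (Finset.Ioo a a.rev) :=
  Function.Involutive.toPerm (fun t => ⟨t.1.rev, Fin.rev_mem_Ioo_rev t.2⟩)
    fun t => Subtype.ext (Fin.rev_rev t.1)

section LongRootForm

variable {F : Type*} [Field F] {n : ℕ}

variable (F) in
def rowProj (a : Fin (2 * n)) : spNilradical F n →ₗ[F] (Finset.Ioo a a.rev → F) where
  toFun x t := (x : Matrix (Fin (2 * n)) (Fin (2 * n)) F) a t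
  map_add' _ _ := rfl
  map_smul' _ _ := rfl

theorem rowProj_surjective (a : Fin (2 * n)) : Function.Surjective (rowProj F a) := by
  intro u
  let y : Matrix (Fin (2 * n)) (Fin (2 * n)) F := Matrix.of fun b c =>
    if h : b = a ∧ c ∈ Finset.Ioo a a.rev then u ⟨c, h.2⟩ else 0
  have hy : ∀ b c, c ≤ b → y b c = 0 := by
    intro b c hcb
    refine dif_neg fun h => ?_
    rw [h.1] at hcb
    exact (Finset.mem_Ioo.mp h.2).1.not_ge hcb
  refine ⟨⟨y - spAdjoint F y, sub_spAdjoint_mem_spNilradical hy⟩, funext fun t => ?_⟩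
  have hy' : y t.1.rev a.rev = 0 := dif_neg fun h => lt_irrefl _ (Finset.mem_Ioo.mp h.2).2
  show (y - spAdjoint F y) a t = u t
  rw [Matrix.sub_apply, spAdjoint_apply, hy', mul_zero, sub_zero]
  exact dif_pos ⟨rfl, t.2⟩

theorem sum_spSign_mul_sub_rev (p q : Fin (2 * n) → F) :
    ∑ t, spSign F t * (p t * q t.rev - q t * p t.rev) = 2 * ∑ t, spSign F t * p t * q t.rev := by
  have h : ∑ t, spSign F t * q t * p t.rev = -∑ t, spSign F t * p t * q t.rev := by
    rw [← Equiv.sum_comp Fin.revPerm]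
    simp [spSign_rev, ← Finset.sum_neg_distrib, mul_right_comm]
  simp only [mul_sub, Finset.sum_sub_distrib, ← mul_assoc, h]
  ring

theorem spBform_eq_compl₁₂ (a : Fin (2 * n)) :
    spBform F n a a.rev = (twistedPairing (Fin.revIoo a)
      fun t => 2 * spSign F a * spSign F t.1).compl₁₂ (rowProj F a) (rowProj F a) := by
  ext ⟨x, hx⟩ ⟨y, hy⟩
  have hx0 := ((mem_spNilradical_iff x).mp hx).1
  have hy0 := ((mem_spNilradical_iff y).mp hy).1
  have hvanish (t) (ht : t ∉ Finset.Ioo a a.rev) :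
      2 * spSign F a * spSign F t * x a t * y a t.rev = 0 := by
    rw [Finset.mem_Ioo, not_and_or, not_lt, not_lt] at ht
    rcases ht with ht | ht
    · rw [hx0 a t ht]; ring
    · rw [hy0 a t.rev (Fin.rev_le_iff.mpr ht)]; ring
  calc spBform F n a a.rev ⟨x, hx⟩ ⟨y, hy⟩
      = ∑ t, (x a t * y t a.rev - y a t * x t a.rev) := by
        show (x * y - y * x) a a.rev = _
        rw [Matrix.sub_apply, Matrix.mul_apply, Matrix.mul_apply, ← Finset.sum_sub_distrib]
    _ = spSign F a * ∑ t, spSign F t * (x a t * y a t.rev - y a t * x a t.rev) := by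
        rw [Finset.mul_sum]
        refine Finset.sum_congr rfl fun t _ => ?_
        rw [apply_rev_of_mem_spNilradical hx t a, apply_rev_of_mem_spNilradical hy t a]
        ring
    _ = ∑ t, 2 * spSign F a * spSign F t * x a t * y a t.rev := by
        rw [sum_spSign_mul_sub_rev, Finset.mul_sum, Finset.mul_sum]
        exact Finset.sum_congr rfl fun t _ => by ring
    _ = ∑ t ∈ Finset.Ioo a a.rev, 2 * spSign F a * spSign F t * x a t * y a t.rev :=
        (Finset.sum_subset (Finset.subset_univ _) fun t _ ht => hvanish t ht).symm
    _ = _ := (Finset.sum_coe_sort _ _).symm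

theorem finrank_range_spBform (a : Fin (2 * n)) (h2 : (2 : F) ≠ 0) :
    Module.finrank F (LinearMap.range (spBform F n a a.rev)) = (Finset.Ioo a a.rev).card := by
  have hc (t : Finset.Ioo a a.rev) : 2 * spSign F a * spSign F t.1 ≠ 0 :=
    mul_ne_zero (mul_ne_zero h2 (spSign_ne_zero a)) (spSign_ne_zero t.1)
  rw [spBform_eq_compl₁₂, LinearMap.finrank_range_compl₁₂_of_surjective _ (rowProj_surjective a),
    LinearMap.finrank_range_of_inj (twistedPairing_injective _ hc),
    Module.finrank_fintype_fun_eq_card, Fintype.card_coe]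

end LongRootForm

/-- For `f ∈ 𝔫*` the coordinate functional `x ↦ x_{i, 2n+1-i}` (written 0-based as
`x_{i, 2n-1-i}`), the rank of the alternating form `B_f(x, y) = f(xy - yx)` on the
nilradical of a Borel subalgebra of `𝔰𝔭_{2n}(F)` equals `2(n - i)` (0-based:
`2(n - 1 - i)`), the dimension of the coadjoint orbit of `e*_{2ε_i}`. -/
theorem rank_spBform_long_root (F : Type*) [Field F] [CharZero F]
    (n : ℕ) (i : Fin n) :
    Module.finrank F (LinearMap.range
        (spBform F n ⟨(i : ℕ), by have := i.isLt; omega⟩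
          ⟨2 * n - 1 - (i : ℕ), by have := i.isLt; omega⟩)) =
      2 * (n - 1 - (i : ℕ)) := by
  have hrev : (⟨2 * n - 1 - (i : ℕ), by omega⟩ : Fin (2 * n)) = Fin.rev ⟨i, by omega⟩ :=
    Fin.ext (by simp only [Fin.val_rev]; omega)
  rw [hrev, finrank_range_spBform _ two_ne_zero, Fin.card_Ioo]
  simp only [Fin.val_rev]
  omega
end

section
/- Let Φ⁺ be A_{n-1}⁺ or D_n⁺. Suppose α₁, β₁, α₂, β₂, γ ∈ Φ⁺ satisfy α₁ + β₁ = α₂ + β₂ = γ and {α₁, β₁} ≠ {α₂, β₂} as sets. Then α₁ + α₂ ∉ Φ⁺. -/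
/-- The standard dot product on `ℝⁿ`. -/
def dotR {n : ℕ} (v w : Fin n → ℝ) : ℝ := ∑ k, v k * w k

lemma dotR_comm {n : ℕ} (v w : Fin n → ℝ) : dotR v w = dotR w v := by
  simp [dotR, mul_comm]

lemma dotR_add_left {n : ℕ} (u v w : Fin n → ℝ) :
    dotR (u + v) w = dotR u w + dotR v w := by
  simp [dotR, add_mul, Finset.sum_add_distrib]

lemma dotR_add_right {n : ℕ} (u v w : Fin n → ℝ) :
    dotR u (v + w) = dotR u v + dotR u w := by
  rw [dotR_comm, dotR_add_left, dotR_comm v u, dotR_comm w u]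

/-- Every positive root of type `A` or `D` has squared length `2`. -/
lemma root_norm {n : ℕ} {Φ : Set (Fin n → ℝ)} (hΦ : Φ = PhiA n ∨ Φ = PhiD n)
    {v : Fin n → ℝ} (hv : v ∈ Φ) : dotR v v = 2 := by
  have key : ∀ i j : Fin n, i ≠ j → (v = eps n i - eps n j ∨ v = eps n i + eps n j) →
      dotR v v = 2 := by
    intro i j hij hv
    rcases hv with h | h <;> subst h
    · simp [dotR, eps, Pi.single_apply, sub_mul, mul_sub, Finset.sum_sub_distrib, hij,
        hij.symm]
      norm_num
    · simp [dotR, eps, Pi.single_apply, add_mul, mul_add, Finset.sum_add_distrib, hij,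
        hij.symm]
      norm_num
  rcases hΦ with h | h <;> subst h
  · obtain ⟨i, j, hij, hv⟩ := hv
    exact key i j hij.ne (Or.inl hv)
  · obtain ⟨i, j, hij, hv⟩ := hv
    exact key i j hij.ne hv

/-- If `u`, `v`, `u + v` all have squared length `2`, then `⟨u, v⟩ = -1`. -/
lemma dot_eq_neg_one {n : ℕ} {u v : Fin n → ℝ} (hu : dotR u u = 2) (hv : dotR v v = 2)
    (huv : dotR (u + v) (u + v) = 2) : dotR u v = -1 := by
  rw [dotR_add_left, dotR_add_right, dotR_add_right, dotR_comm v u] at huv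
  linarith

/-- Two vectors of squared length `2` with inner product `2` are equal. -/
lemma eq_of_dot_eq_two {n : ℕ} {u v : Fin n → ℝ} (hu : dotR u u = 2) (hv : dotR v v = 2)
    (huv : dotR u v = 2) : u = v := by
  have hzero : dotR (u - v) (u - v) = 0 := by
    have h1 : dotR (u - v) (u - v) = dotR u u - dotR u v - dotR v u + dotR v v := by
      simp only [dotR, Pi.sub_apply, sub_mul, mul_sub, Finset.sum_sub_distrib,
        Finset.sum_add_distrib]
      ring
    rw [h1, hu, hv, huv, dotR_comm v u, huv]; ring
  have hsum : ∑ k, (u k - v k) * (u k - v k) = 0 := hzero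
  funext k
  have hk : (u k - v k) * (u k - v k) = 0 := by
    have := (Finset.sum_eq_zero_iff_of_nonneg (fun i _ => mul_self_nonneg (u i - v i))).mp
      hsum k (Finset.mem_univ k)
    exact this
  have : u k - v k = 0 := by
    nlinarith [sq_nonneg (u k - v k)]
  linarith

/-- In a simply-laced classical positive root set (`A_{n-1}⁺` or `D_n⁺`), if
`α₁ + β₁ = α₂ + β₂ = γ` are two distinct decompositions of `γ` as a sum of two positive
roots, then `α₁ + α₂` is not a positive root. -/
theorem sum_not_root_of_two_decompositions (n : ℕ) (Φ : Set (Fin n → ℝ))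
    (hΦ : Φ = PhiA n ∨ Φ = PhiD n)
    (α₁ β₁ α₂ β₂ γ : Fin n → ℝ)
    (hα₁ : α₁ ∈ Φ) (hβ₁ : β₁ ∈ Φ) (hα₂ : α₂ ∈ Φ) (hβ₂ : β₂ ∈ Φ) (hγ : γ ∈ Φ)
    (h₁ : α₁ + β₁ = γ) (h₂ : α₂ + β₂ = γ)
    (hne : ({α₁, β₁} : Set (Fin n → ℝ)) ≠ {α₂, β₂}) :
    α₁ + α₂ ∉ Φ := by
  intro hmem
  have na₁ := root_norm hΦ hα₁
  have nb₁ := root_norm hΦ hβ₁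
  have na₂ := root_norm hΦ hα₂
  have nb₂ := root_norm hΦ hβ₂
  have nγ := root_norm hΦ hγ
  have nsum := root_norm hΦ hmem
  -- ⟨α₁, β₁⟩ = -1
  have d11 : dotR α₁ β₁ = -1 := dot_eq_neg_one na₁ nb₁ (by rw [h₁]; exact nγ)
  -- ⟨α₁, α₂⟩ = -1
  have d12 : dotR α₁ α₂ = -1 := dot_eq_neg_one na₁ na₂ nsum
  -- ⟨α₁, β₂⟩ = ⟨α₁, γ⟩ - ⟨α₁, α₂⟩ = (2 - 1) + 1 = 2
  have dγ : dotR α₁ γ = 1 := by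
    rw [← h₁, dotR_add_right, na₁, d11]; ring
  have d1b2 : dotR α₁ β₂ = 2 := by
    have : dotR α₁ (α₂ + β₂) = 1 := by rw [h₂]; exact dγ
    rw [dotR_add_right, d12] at this
    linarith
  have heq : α₁ = β₂ := eq_of_dot_eq_two na₁ nb₂ d1b2
  have hβeq : β₁ = α₂ := by
    have : α₁ + β₁ = α₂ + α₁ := by rw [h₁, ← h₂, heq]
    have h' : β₁ + α₁ = α₂ + α₁ := by rw [add_comm β₁ α₁]; exact this
    exact add_right_cancel h'
  apply hne
  rw [heq, hβeq, Set.pair_comm]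
end

section
/- Let Φ⁺ be B_n⁺ or C_n⁺ and let γ = ε_i − ε_j with 1 ≤ i < j ≤ n. Suppose α₁, β₁, α₂, β₂ ∈ Φ⁺ satisfy α₁ + β₁ = α₂ + β₂ = γ and {α₁, β₁} ≠ {α₂, β₂} as sets. Then α₁ + α₂ ∉ Φ⁺. -/
/-! Every root of `B_n⁺` or `C_n⁺` has coordinate sum `≥ 0`, with equality exactly for the roots
`ε_a - ε_b`. Hence both summands of a decomposition of `ε_i - ε_j` are of this form, and the
decomposition is `{ε_i - ε_k, ε_k - ε_j}` for some `i < k < j`; two different decompositions use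
different `k ≠ l`. Then `α₁ + α₂` is nonzero at `k`, at `l`, and at `i` or `j`, whereas every root
of `B_n⁺` or `C_n⁺` is supported on at most two coordinates. -/

variable {n : ℕ}

@[simp]
lemma eps_apply (a m : Fin n) : eps n a m = if m = a then 1 else 0 := by
  simp [eps, Pi.single_apply]

@[simp]
lemma sum_eps (a : Fin n) : ∑ m, eps n a m = 1 := by
  simp [eps]

lemma sum_nonneg_of_mem_PhiB_union_PhiC {v : Fin n → ℝ} (hv : v ∈ PhiB n ∪ PhiC n) :
    0 ≤ ∑ m, v m := by
  rcases hv with (⟨a, b, -, rfl | rfl⟩ | ⟨a, rfl⟩) | (⟨a, b, -, rfl | rfl⟩ | ⟨a, rfl⟩) <;>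
    simp [Finset.sum_add_distrib, Finset.sum_sub_distrib]

lemma mem_PhiA_of_sum_nonpos {v : Fin n → ℝ} (hv : v ∈ PhiB n ∪ PhiC n) (hs : ∑ m, v m ≤ 0) :
    v ∈ PhiA n := by
  rcases hv with (⟨a, b, hab, rfl | rfl⟩ | ⟨a, rfl⟩) | (⟨a, b, hab, rfl | rfl⟩ | ⟨a, rfl⟩)
  all_goals first
    | exact ⟨a, b, hab, rfl⟩
    | norm_num [Finset.sum_add_distrib] at hs

lemma mem_PhiA_of_add_eq_eps_sub_eps {i j : Fin n} {α β : Fin n → ℝ}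
    (hα : α ∈ PhiB n ∪ PhiC n) (hβ : β ∈ PhiB n ∪ PhiC n) (h : α + β = eps n i - eps n j) :
    α ∈ PhiA n ∧ β ∈ PhiA n := by
  have hsum : ∑ m, α m + ∑ m, β m = 0 := by
    simpa [Finset.sum_add_distrib, Finset.sum_sub_distrib] using congrArg (∑ m, · m) h
  exact ⟨mem_PhiA_of_sum_nonpos hα (by linarith [sum_nonneg_of_mem_PhiB_union_PhiC hβ]),
    mem_PhiA_of_sum_nonpos hβ (by linarith [sum_nonneg_of_mem_PhiB_union_PhiC hα])⟩

lemma eq_of_eps_sub_add_eps_sub_eq {a b c d i j : Fin n} (hab : a < b) (hcd : c < d)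
    (H : eps n a - eps n b + (eps n c - eps n d) = eps n i - eps n j) :
    (a = i ∧ b = c ∧ d = j) ∨ (c = i ∧ d = a ∧ b = j) := by
  have h := fun m => congrFun H m
  simp only [Pi.add_apply, Pi.sub_apply, eps_apply] at h
  have := h a; have := h b; have := h c; have := h d; have := h i; have := h j
  grind

lemma exists_pair_eq_of_mem_PhiA_of_add_eq_eps_sub_eps {i j : Fin n} {α β : Fin n → ℝ}
    (hα : α ∈ PhiA n) (hβ : β ∈ PhiA n) (h : α + β = eps n i - eps n j) :
    ∃ k, i < k ∧ k < j ∧ ({α, β} : Set (Fin n → ℝ)) = {eps n i - eps n k, eps n k - eps n j} := by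
  obtain ⟨a, b, hab, rfl⟩ := hα
  obtain ⟨c, d, hcd, rfl⟩ := hβ
  rcases eq_of_eps_sub_add_eps_sub_eq hab hcd h with ⟨rfl, rfl, rfl⟩ | ⟨rfl, hda, rfl⟩
  · exact ⟨b, hab, hcd, rfl⟩
  · subst hda
    exact ⟨d, hcd, hab, Set.pair_comm _ _⟩

lemma exists_support_subset_pair {v : Fin n → ℝ} (hv : v ∈ PhiB n ∪ PhiC n) :
    ∃ a b, Function.support v ⊆ {a, b} := by
  rcases hv with (⟨a, b, -, rfl | rfl⟩ | ⟨a, rfl⟩) | (⟨a, b, -, rfl | rfl⟩ | ⟨a, rfl⟩)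
  all_goals first
    | exact ⟨a, b, fun m hm => by contrapose! hm; simp_all⟩
    | exact ⟨a, a, fun m hm => by contrapose! hm; simp_all⟩

lemma not_support_add_subset_pair {i j k l : Fin n} (hik : i < k) (hkj : k < j)
    (hil : i < l) (hlj : l < j) (hkl : k ≠ l) {α₁ α₂ : Fin n → ℝ}
    (h₁ : α₁ ∈ ({eps n i - eps n k, eps n k - eps n j} : Set (Fin n → ℝ)))
    (h₂ : α₂ ∈ ({eps n i - eps n l, eps n l - eps n j} : Set (Fin n → ℝ))) (a b : Fin n) :
    ¬ Function.support (α₁ + α₂) ⊆ {a, b} := by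
  -- the coordinates `k`, `l` of `α₁ + α₂` are `±1`, and its coordinates `i`, `j` are not both `0`
  intro hsub
  simp only [Set.subset_def, Function.mem_support, Set.mem_insert_iff,
    Set.mem_singleton_iff] at hsub
  have := hsub i; have := hsub j; have := hsub k; have := hsub l
  rcases h₁ with rfl | rfl <;> rcases h₂ with rfl | rfl <;>
    simp only [Pi.add_apply, Pi.sub_apply, eps_apply] at * <;> grind

theorem sum_not_root_of_two_decompositions_BC_general (n : ℕ) (Φ : Set (Fin n → ℝ))
    (hΦ : Φ = PhiB n ∨ Φ = PhiC n)
    (i j : Fin n)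
    (α₁ β₁ α₂ β₂ : Fin n → ℝ)
    (hα₁ : α₁ ∈ Φ) (hβ₁ : β₁ ∈ Φ) (hα₂ : α₂ ∈ Φ) (hβ₂ : β₂ ∈ Φ)
    (h₁ : α₁ + β₁ = eps n i - eps n j) (h₂ : α₂ + β₂ = eps n i - eps n j)
    (hne : ({α₁, β₁} : Set (Fin n → ℝ)) ≠ {α₂, β₂}) :
    α₁ + α₂ ∉ Φ := by
  have hΦBC : Φ ⊆ PhiB n ∪ PhiC n := by
    rcases hΦ with rfl | rfl
    exacts [Set.subset_union_left, Set.subset_union_right]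
  obtain ⟨hα₁A, hβ₁A⟩ := mem_PhiA_of_add_eq_eps_sub_eps (hΦBC hα₁) (hΦBC hβ₁) h₁
  obtain ⟨hα₂A, hβ₂A⟩ := mem_PhiA_of_add_eq_eps_sub_eps (hΦBC hα₂) (hΦBC hβ₂) h₂
  obtain ⟨k, hik, hkj, hk⟩ := exists_pair_eq_of_mem_PhiA_of_add_eq_eps_sub_eps hα₁A hβ₁A h₁
  obtain ⟨l, hil, hlj, hl⟩ := exists_pair_eq_of_mem_PhiA_of_add_eq_eps_sub_eps hα₂A hβ₂A h₂
  have hkl : k ≠ l := by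
    rintro rfl
    exact hne (hk.trans hl.symm)
  intro hmem
  obtain ⟨a, b, hab⟩ := exists_support_subset_pair (hΦBC hmem)
  exact not_support_add_subset_pair hik hkj hil hlj hkl (hk ▸ Set.mem_insert _ _)
    (hl ▸ Set.mem_insert _ _) a b hab

/-- In `B_n⁺` or `C_n⁺`, if `γ = ε_i - ε_j` (`i < j`) has two distinct decompositions
`α₁ + β₁ = α₂ + β₂ = γ` as sums of two positive roots, then `α₁ + α₂` is not a positive
root. -/
theorem sum_not_root_of_two_decompositions_BC (n : ℕ) (Φ : Set (Fin n → ℝ))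
    (hΦ : Φ = PhiB n ∨ Φ = PhiC n)
    (i j : Fin n) (hij : i < j)
    (α₁ β₁ α₂ β₂ : Fin n → ℝ)
    (hα₁ : α₁ ∈ Φ) (hβ₁ : β₁ ∈ Φ) (hα₂ : α₂ ∈ Φ) (hβ₂ : β₂ ∈ Φ)
    (h₁ : α₁ + β₁ = eps n i - eps n j) (h₂ : α₂ + β₂ = eps n i - eps n j)
    (hne : ({α₁, β₁} : Set (Fin n → ℝ)) ≠ {α₂, β₂}) :
    α₁ + α₂ ∉ Φ :=
  sum_not_root_of_two_decompositions_BC_general n Φ hΦ i j α₁ β₁ α₂ β₂ hα₁ hβ₁ hα₂ hβ₂ h₁ h₂ hne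
end

section
/- Let Φ⁺ be one of A_{n-1}⁺, B_n⁺, C_n⁺, D_n⁺, let X ⊆ Φ⁺ be a C-quattern, let γ ∈ Z(X), and suppose δ, β ∈ X \ {γ} satisfy δ + β = γ, X ∩ {β − x : x ∈ X} = ∅, and X ∩ {δ + x : x ∈ X} = {γ}. Then X \ {δ, β} is a C-quattern and Z(X) ⊆ Z(X \ {δ, β}). -/
/-- `X ⊆ Φ` is a C-pattern if it is closed under addition of roots within `Φ`. -/
def IsCPattern (n : ℕ) (Φ X : Set (Fin n → ℝ)) : Prop :=
  X ⊆ Φ ∧ ∀ α ∈ X, ∀ β ∈ X, α + β ∈ Φ → α + β ∈ X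

/-- `X ⊆ Φ` is a C-quattern if `X = X₊ \ X₋` for C-patterns `X₋ ⊆ X₊` such that
`α₋ + α₊ ∈ X₋` whenever `α₋ ∈ X₋`, `α₊ ∈ X₊` and `α₋ + α₊ ∈ X₊`. -/
def IsCQuattern (n : ℕ) (Φ X : Set (Fin n → ℝ)) : Prop :=
  ∃ Xp Xm : Set (Fin n → ℝ), IsCPattern n Φ Xp ∧ IsCPattern n Φ Xm ∧ Xm ⊆ Xp ∧
    X = Xp \ Xm ∧ ∀ αm ∈ Xm, ∀ αp ∈ Xp, αm + αp ∈ Xp → αm + αp ∈ Xm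

/-- `Z(X) = {α ∈ X : (α + X) ∩ X = ∅}`. -/
def ZofX (n : ℕ) (X : Set (Fin n → ℝ)) : Set (Fin n → ℝ) :=
  {α ∈ X | ∀ β ∈ X, α + β ∉ X}

/-- The squared Euclidean norm of a vector. -/
def nrm (n : ℕ) (v : Fin n → ℝ) : ℝ := ∑ x, (v x)^2

lemma nrm_pm (n : ℕ) (i j : Fin n) (hij : i ≠ j) (c : ℝ) (hc : c^2 = 1) :
    nrm n (eps n i + c • eps n j) = 2 := by
  have h : ∀ x, ((eps n i + c • eps n j) x)^2
      = (Pi.single i (1:ℝ) : Fin n → ℝ) x + (Pi.single j (1:ℝ) : Fin n → ℝ) x := by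
    intro x
    rcases eq_or_ne x i with rfl | hi
    · simp [eps, Pi.single_apply, hij.symm]
    · rcases eq_or_ne x j with rfl | hj
      · simp [eps, Pi.single_apply, hi, hc]
      · simp [eps, Pi.single_apply, hi, hj]
  unfold nrm
  simp_rw [h]
  rw [Finset.sum_add_distrib, Finset.sum_pi_single', Finset.sum_pi_single']
  norm_num

lemma nrm_single (n : ℕ) (i : Fin n) : nrm n (eps n i) = 1 := by
  have h : ∀ x, ((eps n i) x)^2 = (Pi.single i (1:ℝ) : Fin n → ℝ) x := by
    intro x
    rcases eq_or_ne x i with rfl | hi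
    · simp [eps]
    · simp [eps, Pi.single_apply, hi]
  unfold nrm
  simp_rw [h]
  rw [Finset.sum_pi_single']
  simp

lemma nrm_double (n : ℕ) (i : Fin n) : nrm n (eps n i + eps n i) = 4 := by
  have h : ∀ x, ((eps n i + eps n i) x)^2 = (Pi.single i (4:ℝ) : Fin n → ℝ) x := by
    intro x
    rcases eq_or_ne x i with rfl | hi
    · simp [eps]; norm_num
    · simp [eps, Pi.single_apply, hi]
  unfold nrm
  simp_rw [h]
  rw [Finset.sum_pi_single']
  simp

lemma nrm_sub (n : ℕ) (i j : Fin n) (hij : i ≠ j) : nrm n (eps n i - eps n j) = 2 := by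
  have := nrm_pm n i j hij (-1) (by norm_num)
  rw [neg_one_smul, ← sub_eq_add_neg] at this
  exact this

lemma nrm_addij (n : ℕ) (i j : Fin n) (hij : i ≠ j) : nrm n (eps n i + eps n j) = 2 := by
  have := nrm_pm n i j hij 1 (by norm_num)
  rw [one_smul] at this
  exact this

lemma nrm_add_self (n : ℕ) (v : Fin n → ℝ) : nrm n (v + v) = 4 * nrm n v := by
  unfold nrm
  rw [Finset.mul_sum]
  refine Finset.sum_congr rfl fun x _ => ?_
  rw [Pi.add_apply]; ring

lemma nrmA {n : ℕ} {v : Fin n → ℝ} (hv : v ∈ PhiA n) : nrm n v = 2 := by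
  obtain ⟨i, j, hij, rfl⟩ := hv
  exact nrm_sub n i j hij.ne

lemma nrmB {n : ℕ} {v : Fin n → ℝ} (hv : v ∈ PhiB n) : nrm n v = 2 ∨ nrm n v = 1 := by
  rcases hv with ⟨i, j, hij, rfl | rfl⟩ | ⟨i, rfl⟩
  · exact Or.inl (nrm_sub n i j hij.ne)
  · exact Or.inl (nrm_addij n i j hij.ne)
  · exact Or.inr (nrm_single n i)

lemma nrmC {n : ℕ} {v : Fin n → ℝ} (hv : v ∈ PhiC n) : nrm n v = 2 ∨ nrm n v = 4 := by
  rcases hv with ⟨i, j, hij, rfl | rfl⟩ | ⟨i, rfl⟩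
  · exact Or.inl (nrm_sub n i j hij.ne)
  · exact Or.inl (nrm_addij n i j hij.ne)
  · exact Or.inr (nrm_double n i)

lemma nrmD {n : ℕ} {v : Fin n → ℝ} (hv : v ∈ PhiD n) : nrm n v = 2 := by
  rcases hv with ⟨i, j, hij, rfl | rfl⟩
  · exact nrm_sub n i j hij.ne
  · exact nrm_addij n i j hij.ne

lemma no_double (n : ℕ) (Φ : Set (Fin n → ℝ))
    (hΦ : Φ = PhiA n ∨ Φ = PhiB n ∨ Φ = PhiC n ∨ Φ = PhiD n)
    (v : Fin n → ℝ) (hv : v ∈ Φ) (hvv : v + v ∈ Φ) : False := by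
  have h4 := nrm_add_self n v
  rcases hΦ with rfl | rfl | rfl | rfl
  · have h1 := nrmA hv; have h2 := nrmA hvv; linarith
  · rcases nrmB hv with h1 | h1 <;> rcases nrmB hvv with h2 | h2 <;> linarith
  · rcases nrmC hv with h1 | h1 <;> rcases nrmC hvv with h2 | h2 <;> linarith
  · have h1 := nrmD hv; have h2 := nrmD hvv; linarith

/-- The AL-move: removing an arm `β` and a leg `δ` with `δ + β = γ ∈ Z(X)` from a
C-quattern `X` yields a C-quattern, whose center contains `Z(X)`. -/
theorem AL_move_quattern (n : ℕ) (Φ : Set (Fin n → ℝ))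
    (hΦ : Φ = PhiA n ∨ Φ = PhiB n ∨ Φ = PhiC n ∨ Φ = PhiD n)
    (X : Set (Fin n → ℝ)) (hX : IsCQuattern n Φ X)
    (γ : Fin n → ℝ) (hγ : γ ∈ ZofX n X)
    (δ β : Fin n → ℝ) (hδ : δ ∈ X \ {γ}) (hβ : β ∈ X \ {γ})
    (hsum : δ + β = γ)
    (harm : X ∩ {y | ∃ x ∈ X, y = β - x} = ∅)
    (hleg : X ∩ {y | ∃ x ∈ X, y = δ + x} = {γ}) :
    IsCQuattern n Φ (X \ {δ, β}) ∧ ZofX n X ⊆ ZofX n (X \ {δ, β}) := by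
  obtain ⟨Xp, Xm, hXp, hXm, hsub, hXeq, hq⟩ := hX
  obtain ⟨hδX, hδγ⟩ := hδ
  obtain ⟨hβX, hβγ⟩ := hβ
  obtain ⟨hγX, hγZ⟩ := hγ
  have hmem : ∀ a, a ∈ X ↔ a ∈ Xp ∧ a ∉ Xm := fun a => by rw [hXeq]; exact Iff.rfl
  have hXΦ : X ⊆ Φ := fun a ha => hXp.1 ((hmem a).1 ha).1
  have hδp : δ ∈ Xp := ((hmem δ).1 hδX).1
  have hδm : δ ∉ Xm := ((hmem δ).1 hδX).2
  have hβm : β ∉ Xm := ((hmem β).1 hβX).2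
  have hγm : γ ∉ Xm := ((hmem γ).1 hγX).2
  have hδβ : δ ≠ β := by
    intro h
    subst h
    exact no_double n Φ hΦ δ (hXΦ hδX) (hsum ▸ hXΦ hγX)
  constructor
  · refine ⟨Xp \ {β}, Xm ∪ {δ}, ?_, ?_, ?_, ?_, ?_⟩
    · -- Xp \ {β} is a C-pattern
      constructor
      · exact fun a ha => hXp.1 ha.1
      · rintro a ⟨haP, haβ⟩ b ⟨hbP, hbβ⟩ hab
        have habP : a + b ∈ Xp := hXp.2 a haP b hbP hab
        refine ⟨habP, ?_⟩
        simp only [Set.mem_singleton_iff]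
        intro habβ
        by_cases haM : a ∈ Xm
        · exact hβm (habβ ▸ hq a haM b hbP habP)
        · by_cases hbM : b ∈ Xm
          · have h1 : b + a ∈ Xm := hq b hbM a haP (by rwa [add_comm b a])
            rw [add_comm b a, habβ] at h1
            exact hβm h1
          · have haX : a ∈ X := (hmem a).2 ⟨haP, haM⟩
            have hbX : b ∈ X := (hmem b).2 ⟨hbP, hbM⟩
            have : a ∈ X ∩ {y | ∃ x ∈ X, y = β - x} :=
              ⟨haX, b, hbX, by rw [← habβ]; abel⟩
            rw [harm] at this
            exact this
    · -- Xm ∪ {δ} is a C-pattern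
      constructor
      · rintro a (h | h)
        · exact hXm.1 h
        · exact Set.mem_singleton_iff.1 h ▸ hXΦ hδX
      · rintro a (haM | haδ) b (hbM | hbδ) hab
        · exact Or.inl (hXm.2 a haM b hbM hab)
        · rw [Set.mem_singleton_iff] at hbδ
          rw [hbδ] at hab ⊢
          exact Or.inl (hq a haM δ hδp (hXp.2 a (hsub haM) δ hδp hab))
        · rw [Set.mem_singleton_iff] at haδ
          rw [haδ] at hab ⊢
          have h1 : b + δ ∈ Xm :=
            hq b hbM δ hδp (hXp.2 b (hsub hbM) δ hδp (by rwa [add_comm b δ]))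
          rw [add_comm b δ] at h1
          exact Or.inl h1
        · rw [Set.mem_singleton_iff] at haδ hbδ
          rw [haδ, hbδ] at hab
          exact absurd hab (fun hc => no_double n Φ hΦ δ (hXΦ hδX) hc)
    · -- Xm ∪ {δ} ⊆ Xp \ {β}
      rintro a (h | h)
      · exact ⟨hsub h, fun hc => hβm (Set.mem_singleton_iff.1 hc ▸ h)⟩
      · rw [Set.mem_singleton_iff] at h
        subst h
        exact ⟨hδp, fun hc => hδβ (Set.mem_singleton_iff.1 hc)⟩
    · -- X \ {δ, β} = (Xp \ {β}) \ (Xm ∪ {δ})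
      ext a
      rw [hXeq]
      simp only [Set.mem_diff, Set.mem_insert_iff, Set.mem_singleton_iff,
        Set.mem_union]
      tauto
    · -- quattern condition
      rintro am (haM | haδ) ap ⟨hapP, hapβ⟩ hs
      · exact Or.inl (hq am haM ap hapP hs.1)
      · rw [Set.mem_singleton_iff] at haδ
        subst haδ
        by_cases hapM : ap ∈ Xm
        · have h1 : ap + am ∈ Xm :=
            hq ap hapM am hδp (by rw [add_comm ap am]; exact hs.1)
          rw [add_comm ap am] at h1
          exact Or.inl h1
        · have hapX : ap ∈ X := (hmem ap).2 ⟨hapP, hapM⟩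
          by_cases hM2 : am + ap ∈ Xm
          · exact Or.inl hM2
          · exfalso
            have hX2 : am + ap ∈ X := (hmem _).2 ⟨hs.1, hM2⟩
            have h3 : am + ap ∈ X ∩ {y | ∃ x ∈ X, y = am + x} := ⟨hX2, ap, hapX, rfl⟩
            rw [hleg] at h3
            rw [Set.mem_singleton_iff] at h3
            have : ap = β := add_left_cancel (h3.trans hsum.symm)
            exact hapβ (Set.mem_singleton_iff.2 this)
  · -- Z(X) ⊆ Z(X \ {δ, β})
    rintro α ⟨hαX, hαZ⟩
    refine ⟨⟨hαX, ?_⟩, ?_⟩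
    · rintro (rfl | rfl)
      · exact hαZ β hβX (hsum ▸ hγX)
      · exact hαZ δ hδX (by rw [add_comm, hsum]; exact hγX)
    · intro b hb hc
      exact hαZ b hb.1 hc.1
end

section
/- Let n = 4. Every coadjoint N-orbit Ω ⊆ 𝔫* on which rk B_f = 4 (for some, equivalently every, f ∈ Ω) contains exactly one linear form h with Supp(h) = {(2,3), (1,4)} or Supp(h) = {(1,4)}; conversely, every h ∈ 𝔫* with Supp(h) equal to one of these two sets satisfies rk B_h = 4. -/
open Matrix

/-!
Write `f_ij = f(E_ij)` (indices from 0). The central coordinate `f_03` and the minor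
`f_12 f_03 - f_02 f_13` are constant on coadjoint orbits. If `f_03 = 0`, every `B_f(x, ·)`
lies in the plane spanned by `E_12^*` and `B_f(E_12, ·)`, so `rk B_f ≤ 2`. If `f_03 ≠ 0`,
conjugating by `1 + a E_01 + b E_02 + c E_13 + d E_23` with suitable `a, b, c, d` kills
`f_01, f_02, f_13, f_23`; a form with these four coordinates zero is determined by the two
invariants, and for it `B_f` has rank 4 because `B_f(E_01, ·), B_f(E_02, ·), B_f(E_13, ·),
B_f(E_23, ·)` are nonzero multiples of four distinct coordinate functionals.
-/

namespace StrictUpper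

section General

variable {F : Type*} [Field F] {n : ℕ}

@[simp] lemma coe_Eelt (i j : Fin n) (h : i < j) :
    (Eelt F n i j h : Matrix (Fin n) (Fin n) F) = single i j 1 := rfl

lemma mem_Supp_iff {f : Module.Dual F (strictUpper F n)} {i j : Fin n} (h : i < j) :
    (i, j) ∈ Supp F n f ↔ f (Eelt F n i j h) ≠ 0 :=
  ⟨fun ⟨_, hf⟩ => hf, fun hf => ⟨h, hf⟩⟩

lemma apply_Eelt_eq_zero_iff {f : Module.Dual F (strictUpper F n)} {i j : Fin n}
    (h : i < j) : f (Eelt F n i j h) = 0 ↔ (i, j) ∉ Supp F n f := by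
  rw [mem_Supp_iff h, not_not]

variable (F n) in
def coord (i j : Fin n) : Module.Dual F (strictUpper F n) :=
  entryLinearMap F F i j ∘ₗ (strictUpper F n).subtype

@[simp] lemma coord_apply (i j : Fin n) (x : strictUpper F n) :
    coord F n i j x = (x : Matrix (Fin n) (Fin n) F) i j := rfl

lemma linearIndependent_coord {ι : Type*} {p : ι → Fin n × Fin n} (hp : p.Injective)
    (hlt : ∀ k, (p k).1 < (p k).2) :
    LinearIndependent F fun k => coord F n (p k).1 (p k).2 := by
  classical
  rw [linearIndependent_iff']
  intro s c hc k hk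
  have := congrArg (fun φ : Module.Dual F (strictUpper F n) => φ (Eelt F n _ _ (hlt k))) hc
  simpa [single_apply, ← Prod.ext_iff, hp.eq_iff, hk] using this

lemma conj_mem {g g' x : Matrix (Fin n) (Fin n) F} (hg : g.BlockTriangular id)
    (hg' : g'.BlockTriangular id) (hx : x ∈ strictUpper F n) :
    g' * x * g ∈ strictUpper F n := by
  intro k l hlk
  simp only [mul_apply, Finset.sum_mul]
  refine Finset.sum_eq_zero fun m _ => Finset.sum_eq_zero fun m' _ => ?_
  rcases lt_or_ge m' k with hm' | hm'
  · rw [hg' hm', zero_mul, zero_mul]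
  rcases le_or_gt m m' with hm | hm
  · rw [hx m' m hm, mul_zero, zero_mul]
  · rw [hg (hlk.trans_lt (hm'.trans_lt hm)), mul_zero]

def conj {g g' : Matrix (Fin n) (Fin n) F} (hg : g.BlockTriangular id)
    (hg' : g'.BlockTriangular id) : strictUpper F n →ₗ[F] strictUpper F n where
  toFun x := ⟨g' * x * g, conj_mem hg hg' x.2⟩
  map_add' x y := Subtype.ext <| by simp [mul_add, add_mul]
  map_smul' c x := Subtype.ext <| by simp

lemma coe_conj_Eelt {g g' : Matrix (Fin n) (Fin n) F} (hg : g.BlockTriangular id)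
    (hg' : g'.BlockTriangular id) (i j k l : Fin n) (h : i < j) :
    (conj hg hg' (Eelt F n i j h) : Matrix (Fin n) (Fin n) F) k l = g' k i * g j l := by
  simp [conj, mul_apply, single_apply, ite_and]

lemma _root_.IsUnitriangular.blockTriangular {g : Matrix (Fin n) (Fin n) F}
    (hg : IsUnitriangular g) : g.BlockTriangular id :=
  fun i j h => hg.2 i j h

lemma exists_eq_comp_conj_of_mem_coadjOrbit {f h : Module.Dual F (strictUpper F n)}
    (hh : h ∈ coadjOrbit F n f) :
    ∃ (g g' : Matrix (Fin n) (Fin n) F) (hg : IsUnitriangular g) (hg' : IsUnitriangular g'),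
      h = f ∘ₗ conj hg.blockTriangular hg'.blockTriangular := by
  obtain ⟨g, g', hg, hg', -, -, hfg⟩ := hh
  exact ⟨g, g', hg, hg', LinearMap.ext fun x => hfg x _⟩

lemma comp_conj_mem_coadjOrbit (f : Module.Dual F (strictUpper F n))
    {g g' : Matrix (Fin n) (Fin n) F} (hg : IsUnitriangular g) (hg' : IsUnitriangular g')
    (hgg' : g * g' = 1) (hg'g : g' * g = 1) :
    f ∘ₗ conj hg.blockTriangular hg'.blockTriangular ∈ coadjOrbit F n f :=
  ⟨g, g', hg, hg', hgg', hg'g, fun _ _ => rfl⟩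

variable (F n) in
def Bmap (f : Module.Dual F (strictUpper F n)) :
    strictUpper F n →ₗ[F] Module.Dual F (strictUpper F n) :=
  (commBracket F n).compr₂ f

lemma rkB_eq_finrank_range (f : Module.Dual F (strictUpper F n)) :
    rkB F n f = Module.finrank F (LinearMap.range (Bmap F n f)) := rfl

@[simp] lemma Bmap_apply (f : Module.Dual F (strictUpper F n)) (x y : strictUpper F n) :
    Bmap F n f x y = f (commBracket F n x y) := rfl

end General

abbrev e01 (F : Type*) [Field F] : strictUpper F 4 := Eelt F 4 0 1 (by decide)
abbrev e02 (F : Type*) [Field F] : strictUpper F 4 := Eelt F 4 0 2 (by decide)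
abbrev e03 (F : Type*) [Field F] : strictUpper F 4 := Eelt F 4 0 3 (by decide)
abbrev e12 (F : Type*) [Field F] : strictUpper F 4 := Eelt F 4 1 2 (by decide)
abbrev e13 (F : Type*) [Field F] : strictUpper F 4 := Eelt F 4 1 3 (by decide)
abbrev e23 (F : Type*) [Field F] : strictUpper F 4 := Eelt F 4 2 3 (by decide)

section Four

variable {F : Type*} [Field F]

lemma eq_sum_Eelt (x : strictUpper F 4) :
    x = x.1 0 1 • e01 F + x.1 0 2 • e02 F + x.1 0 3 • e03 F
      + x.1 1 2 • e12 F + x.1 1 3 • e13 F + x.1 2 3 • e23 F := by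
  ext i j
  fin_cases i <;> fin_cases j <;> simp <;> exact x.2 _ _ (by decide)

lemma dual_apply (f : Module.Dual F (strictUpper F 4)) (x : strictUpper F 4) :
    f x = x.1 0 1 * f (e01 F) + x.1 0 2 * f (e02 F) + x.1 0 3 * f (e03 F)
      + x.1 1 2 * f (e12 F) + x.1 1 3 * f (e13 F) + x.1 2 3 * f (e23 F) := by
  conv_lhs => rw [eq_sum_Eelt x]
  simp only [map_add, map_smul, smul_eq_mul]

lemma dual_ext {f f' : Module.Dual F (strictUpper F 4)}
    (h01 : f (e01 F) = f' (e01 F)) (h02 : f (e02 F) = f' (e02 F)) (h03 : f (e03 F) = f' (e03 F))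
    (h12 : f (e12 F) = f' (e12 F)) (h13 : f (e13 F) = f' (e13 F)) (h23 : f (e23 F) = f' (e23 F)) :
    f = f' :=
  LinearMap.ext fun x => by rw [dual_apply f, dual_apply f', h01, h02, h03, h12, h13, h23]

lemma apply_commBracket (f : Module.Dual F (strictUpper F 4)) (x y : strictUpper F 4) :
    f (commBracket F 4 x y)
      = f (e02 F) * (x.1 0 1 * y.1 1 2 - y.1 0 1 * x.1 1 2)
        + f (e13 F) * (x.1 1 2 * y.1 2 3 - y.1 1 2 * x.1 2 3)
        + f (e03 F) * (x.1 0 1 * y.1 1 3 + x.1 0 2 * y.1 2 3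
          - y.1 0 1 * x.1 1 3 - y.1 0 2 * x.1 2 3) := by
  have hx : ∀ i j : Fin 4, j ≤ i → x.1 i j = 0 := x.2
  have hy : ∀ i j : Fin 4, j ≤ i → y.1 i j = 0 := y.2
  rw [dual_apply]
  simp (disch := decide) only [commBracket, LinearMap.mk₂_apply, Matrix.sub_apply, mul_apply,
    Fin.sum_univ_four, hx, hy, zero_mul, mul_zero, add_zero, zero_add]
  ring

lemma Bmap_e01 (f : Module.Dual F (strictUpper F 4)) :
    Bmap F 4 f (e01 F) = f (e02 F) • coord F 4 1 2 + f (e03 F) • coord F 4 1 3 := by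
  ext y; simp [apply_commBracket]

lemma Bmap_e02 (f : Module.Dual F (strictUpper F 4)) :
    Bmap F 4 f (e02 F) = f (e03 F) • coord F 4 2 3 := by
  ext y; simp [apply_commBracket]

lemma Bmap_e03 (f : Module.Dual F (strictUpper F 4)) :
    Bmap F 4 f (e03 F) = 0 := by
  ext y; simp [apply_commBracket]

lemma Bmap_e12 (f : Module.Dual F (strictUpper F 4)) :
    Bmap F 4 f (e12 F) = -f (e02 F) • coord F 4 0 1 + f (e13 F) • coord F 4 2 3 := by
  ext y; simp [apply_commBracket]

lemma Bmap_e13 (f : Module.Dual F (strictUpper F 4)) :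
    Bmap F 4 f (e13 F) = -f (e03 F) • coord F 4 0 1 := by
  ext y; simp [apply_commBracket]

lemma Bmap_e23 (f : Module.Dual F (strictUpper F 4)) :
    Bmap F 4 f (e23 F) = -f (e03 F) • coord F 4 0 2 - f (e13 F) • coord F 4 1 2 := by
  ext y; simp [apply_commBracket]; ring

section

variable {f : Module.Dual F (strictUpper F 4)}

lemma range_Bmap_le {S : Submodule F (Module.Dual F (strictUpper F 4))}
    (h01 : Bmap F 4 f (e01 F) ∈ S) (h02 : Bmap F 4 f (e02 F) ∈ S)
    (h03 : Bmap F 4 f (e03 F) ∈ S) (h12 : Bmap F 4 f (e12 F) ∈ S)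
    (h13 : Bmap F 4 f (e13 F) ∈ S) (h23 : Bmap F 4 f (e23 F) ∈ S) :
    LinearMap.range (Bmap F 4 f) ≤ S := by
  rintro _ ⟨x, rfl⟩
  rw [eq_sum_Eelt x]
  simp only [map_add, map_smul]
  exact S.add_mem (S.add_mem (S.add_mem (S.add_mem (S.add_mem (S.smul_mem _ h01)
    (S.smul_mem _ h02)) (S.smul_mem _ h03)) (S.smul_mem _ h12)) (S.smul_mem _ h13))
    (S.smul_mem _ h23)

lemma rkB_le_two (h03 : f (e03 F) = 0) : rkB F 4 f ≤ 2 := by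
  let S := Submodule.span F (Set.range ![coord F 4 1 2, Bmap F 4 f (e12 F)])
  have hmem : ∀ k, ![coord F 4 1 2, Bmap F 4 f (e12 F)] k ∈ S :=
    fun k => Submodule.subset_span ⟨k, rfl⟩
  have hle : LinearMap.range (Bmap F 4 f) ≤ S := by
    apply range_Bmap_le
    · rw [Bmap_e01, h03, zero_smul, add_zero]; exact S.smul_mem _ (hmem 0)
    · simp [Bmap_e02, h03]
    · simp [Bmap_e03]
    · exact hmem 1
    · simp [Bmap_e13, h03]
    · rw [Bmap_e23, h03]; simpa using S.smul_mem (-f (e13 F)) (hmem 0)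
  calc rkB F 4 f ≤ Module.finrank F S := Submodule.finrank_mono hle
    _ ≤ 2 := finrank_range_le_card _

lemma rkB_eq_four (h02 : f (e02 F) = 0) (h13 : f (e13 F) = 0) (h03 : f (e03 F) ≠ 0) :
    rkB F 4 f = 4 := by
  let p : Fin 4 → Fin 4 × Fin 4 := ![(1, 3), (2, 3), (0, 1), (0, 2)]
  let v : Fin 4 → Module.Dual F (strictUpper F 4) := fun k => coord F 4 (p k).1 (p k).2
  have hv : LinearIndependent F v := linearIndependent_coord (by decide) (by decide)
  have hmem : ∀ k, v k ∈ Submodule.span F (Set.range v) :=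
    fun k => Submodule.subset_span ⟨k, rfl⟩
  have hrange : LinearMap.range (Bmap F 4 f) = Submodule.span F (Set.range v) := by
    apply le_antisymm
    · apply range_Bmap_le
      · rw [Bmap_e01, h02, zero_smul, zero_add]; exact Submodule.smul_mem _ _ (hmem 0)
      · rw [Bmap_e02]; exact Submodule.smul_mem _ _ (hmem 1)
      · simp [Bmap_e03]
      · simp [Bmap_e12, h02, h13]
      · rw [Bmap_e13]; exact Submodule.smul_mem _ _ (hmem 2)
      · rw [Bmap_e23, h13, zero_smul, sub_zero]; exact Submodule.smul_mem _ _ (hmem 3)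
    · rw [Submodule.span_le]
      rintro _ ⟨k, rfl⟩
      fin_cases k
      · exact ⟨(f (e03 F))⁻¹ • e01 F, by simp [Bmap_e01, h02, smul_smul, h03, v, p]⟩
      · exact ⟨(f (e03 F))⁻¹ • e02 F, by simp [Bmap_e02, smul_smul, h03, v, p]⟩
      · exact ⟨-(f (e03 F))⁻¹ • e13 F, by simp [Bmap_e13, smul_smul, h03, v, p]⟩
      · exact ⟨-(f (e03 F))⁻¹ • e23 F, by simp [Bmap_e23, h13, smul_smul, h03, v, p]⟩
  rw [rkB_eq_finrank_range, hrange, finrank_span_eq_card hv, Fintype.card_fin]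

end

lemma apply_conj_Eelt (f : Module.Dual F (strictUpper F 4)) {g g' : Matrix (Fin 4) (Fin 4) F}
    (hg : g.BlockTriangular id) (hg' : g'.BlockTriangular id) (i j : Fin 4) (h : i < j) :
    f (conj hg hg' (Eelt F 4 i j h))
      = g' 0 i * g j 1 * f (e01 F) + g' 0 i * g j 2 * f (e02 F) + g' 0 i * g j 3 * f (e03 F)
        + g' 1 i * g j 2 * f (e12 F) + g' 1 i * g j 3 * f (e13 F) + g' 2 i * g j 3 * f (e23 F) := by
  rw [dual_apply]
  simp only [coe_conj_Eelt]

def minor (f : Module.Dual F (strictUpper F 4)) : F :=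
  f (e12 F) * f (e03 F) - f (e02 F) * f (e13 F)

lemma apply_e03_of_mem_coadjOrbit {f h : Module.Dual F (strictUpper F 4)}
    (hh : h ∈ coadjOrbit F 4 f) : h (e03 F) = f (e03 F) := by
  obtain ⟨g, g', hg, hg', rfl⟩ := exists_eq_comp_conj_of_mem_coadjOrbit hh
  simp (disch := decide) only [LinearMap.comp_apply, apply_conj_Eelt, hg.1, hg'.1, hg.2, hg'.2]
  ring

lemma minor_of_mem_coadjOrbit {f h : Module.Dual F (strictUpper F 4)}
    (hh : h ∈ coadjOrbit F 4 f) : minor h = minor f := by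
  obtain ⟨g, g', hg, hg', rfl⟩ := exists_eq_comp_conj_of_mem_coadjOrbit hh
  simp (disch := decide) only [minor, LinearMap.comp_apply, apply_conj_Eelt, hg.1, hg'.1, hg.2,
    hg'.2]
  ring

def unipotent (a b c d : F) : Matrix (Fin 4) (Fin 4) F :=
  !![1, a, b, 0; 0, 1, 0, c; 0, 0, 1, d; 0, 0, 0, 1]

def unipotentInv (a b c d : F) : Matrix (Fin 4) (Fin 4) F :=
  !![1, -a, -b, a * c + b * d; 0, 1, 0, -c; 0, 0, 1, -d; 0, 0, 0, 1]

lemma isUnitriangular_unipotent (a b c d : F) : IsUnitriangular (unipotent a b c d) := by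
  constructor
  · intro i; fin_cases i <;> rfl
  · intro i j h; fin_cases i <;> fin_cases j <;> first | rfl | exact absurd h (by decide)

lemma isUnitriangular_unipotentInv (a b c d : F) : IsUnitriangular (unipotentInv a b c d) := by
  constructor
  · intro i; fin_cases i <;> rfl
  · intro i j h; fin_cases i <;> fin_cases j <;> first | rfl | exact absurd h (by decide)

lemma unipotent_mul_unipotentInv (a b c d : F) : unipotent a b c d * unipotentInv a b c d = 1 := by
  ext i j
  fin_cases i <;> fin_cases j <;> simp [unipotent, unipotentInv, mul_apply, Fin.sum_univ_four]

lemma unipotentInv_mul_unipotent (a b c d : F) : unipotentInv a b c d * unipotent a b c d = 1 := by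
  ext i j
  fin_cases i <;> fin_cases j <;> simp [unipotent, unipotentInv, mul_apply, Fin.sum_univ_four]
  ring

def normalForm (c d : F) : Module.Dual F (strictUpper F 4) :=
  c • coord F 4 0 3 + d • coord F 4 1 2

lemma normalForm_mem_coadjOrbit (f : Module.Dual F (strictUpper F 4)) (h03 : f (e03 F) ≠ 0) :
    normalForm (f (e03 F)) (minor f / f (e03 F)) ∈ coadjOrbit F 4 f := by
  set a := f (e13 F) / f (e03 F)
  set b := f (e23 F) / f (e03 F)
  set c := -f (e01 F) / f (e03 F)
  set d := -f (e02 F) / f (e03 F)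
  convert comp_conj_mem_coadjOrbit f (isUnitriangular_unipotent a b c d)
    (isUnitriangular_unipotentInv a b c d) (unipotent_mul_unipotentInv a b c d)
    (unipotentInv_mul_unipotent a b c d) using 1
  apply dual_ext <;>
    simp [normalForm, minor, apply_conj_Eelt, unipotent, unipotentInv, a, b, c, d] <;>
    field_simp <;> ring

lemma Supp_eq_iff (h : Module.Dual F (strictUpper F 4)) :
    (Supp F 4 h = {((1 : Fin 4), (2 : Fin 4)), ((0 : Fin 4), (3 : Fin 4))} ∨
      Supp F 4 h = {((0 : Fin 4), (3 : Fin 4))}) ↔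
    h (e01 F) = 0 ∧ h (e02 F) = 0 ∧ h (e13 F) = 0 ∧ h (e23 F) = 0 ∧ h (e03 F) ≠ 0 := by
  constructor
  · rintro (hS | hS) <;>
      simp only [apply_Eelt_eq_zero_iff, ← mem_Supp_iff, hS] <;> decide
  · rintro ⟨h01, h02, h13, h23, h03⟩
    have hSupp : ∀ p, p ∈ Supp F 4 h ↔ p = (0, 3) ∨ p = (1, 2) ∧ h (e12 F) ≠ 0 := by
      rintro ⟨i, j⟩
      fin_cases i <;> fin_cases j <;> simp [Supp, h01, h02, h03, h13, h23]
    by_cases h12 : h (e12 F) = 0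
    · right; ext p; simp [hSupp, h12]
    · left; ext p; simp [hSupp, h12, or_comm]

lemma Supp_normalForm {c : F} (hc : c ≠ 0) (d : F) :
    Supp F 4 (normalForm c d) = {((1 : Fin 4), (2 : Fin 4)), ((0 : Fin 4), (3 : Fin 4))} ∨
      Supp F 4 (normalForm c d) = {((0 : Fin 4), (3 : Fin 4))} :=
  (Supp_eq_iff _).2 (by simp [normalForm, hc])

lemma eq_normalForm_of_Supp {h : Module.Dual F (strictUpper F 4)}
    (hS : Supp F 4 h = {((1 : Fin 4), (2 : Fin 4)), ((0 : Fin 4), (3 : Fin 4))} ∨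
      Supp F 4 h = {((0 : Fin 4), (3 : Fin 4))}) :
    h = normalForm (h (e03 F)) (minor h / h (e03 F)) := by
  obtain ⟨h01, h02, h13, h23, h03⟩ := (Supp_eq_iff h).1 hS
  apply dual_ext <;> simp [normalForm, minor, h01, h02, h13, h23, h03]

end Four

end StrictUpper

open StrictUpper

theorem dim_four_orbits_n4_general (F : Type*) [Field F] :
    (∀ f : Module.Dual F (strictUpper F 4), rkB F 4 f = 4 →
      ∃! h : Module.Dual F (strictUpper F 4), h ∈ coadjOrbit F 4 f ∧
        (Supp F 4 h = {((1 : Fin 4), (2 : Fin 4)), ((0 : Fin 4), (3 : Fin 4))} ∨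
         Supp F 4 h = {((0 : Fin 4), (3 : Fin 4))})) ∧
    (∀ h : Module.Dual F (strictUpper F 4),
      (Supp F 4 h = {((1 : Fin 4), (2 : Fin 4)), ((0 : Fin 4), (3 : Fin 4))} ∨
       Supp F 4 h = {((0 : Fin 4), (3 : Fin 4))}) →
      rkB F 4 h = 4) := by
  refine ⟨fun f hf => ?_, fun h hS => ?_⟩
  · have h03 : f (e03 F) ≠ 0 := fun h03 => by simpa [hf] using rkB_le_two h03
    refine ⟨normalForm (f (e03 F)) (minor f / f (e03 F)),
      ⟨normalForm_mem_coadjOrbit f h03, Supp_normalForm h03 _⟩, ?_⟩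
    rintro h ⟨hh, hS⟩
    rw [eq_normalForm_of_Supp hS, apply_e03_of_mem_coadjOrbit hh, minor_of_mem_coadjOrbit hh]
  · obtain ⟨-, h02, h13, -, h03⟩ := (Supp_eq_iff h).1 hS
    exact rkB_eq_four h02 h13 h03

/-- `n = 4`: every coadjoint orbit of dimension 4 contains exactly one linear form `h`
with `Supp h = {(2,3), (1,4)}` or `Supp h = {(1,4)}` (0-based: `{(1,2), (0,3)}` or
`{(0,3)}`); conversely, every `h` with such support satisfies `rk B_h = 4`. -/
theorem dim_four_orbits_n4 (F : Type*) [Field F] [IsAlgClosed F] [CharZero F] :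
    (∀ f : Module.Dual F (strictUpper F 4), rkB F 4 f = 4 →
      ∃! h : Module.Dual F (strictUpper F 4), h ∈ coadjOrbit F 4 f ∧
        (Supp F 4 h = {((1 : Fin 4), (2 : Fin 4)), ((0 : Fin 4), (3 : Fin 4))} ∨
         Supp F 4 h = {((0 : Fin 4), (3 : Fin 4))})) ∧
    (∀ h : Module.Dual F (strictUpper F 4),
      (Supp F 4 h = {((1 : Fin 4), (2 : Fin 4)), ((0 : Fin 4), (3 : Fin 4))} ∨
       Supp F 4 h = {((0 : Fin 4), (3 : Fin 4))}) →
      rkB F 4 h = 4) :=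
  dim_four_orbits_n4_general F
end
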